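/- arXiv:1312.5019 — 8 statements merged into one kernel-verified Lean document; each statement's English description precedes it below -/
import Mathlib

section
/- The function v(x) = sgn(x)·√(x - ln(1+x)) is a strictly increasing continuous bijection from (-1, ∞) onto ℝ. -/
/-!
The derivative `x / (1 + x)` of `g x = x - log (1 + x)` makes `g` strictly decreasing on `(-1, 0]`
and strictly increasing on `[0, ∞)`, with `g 0 = 0`, and `g` tends to `+∞` at both ends of
`(-1, ∞)`. Hence `v = sign · √g` is `-√g` on the left branch and `√g` on the right one, both
strictly increasing, and the intermediate value theorem applied to `g` on each branch hits every
`c²`, so `v` is onto `ℝ`. A strictly monotone map of an open interval onto `ℝ` is automatically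
continuous.
-/

open Real Set Filter Topology

noncomputable section

def signSqrt (f : ℝ → ℝ) (x : ℝ) : ℝ := Real.sign x * √(f x)

section SignSqrt

variable {f : ℝ → ℝ} {a : ℝ}

lemma signSqrt_eqOn_Ici (h0 : f 0 = 0) : EqOn (signSqrt f) (fun x => √(f x)) (Ici 0) := by
  intro x (hx : 0 ≤ x)
  rcases hx.eq_or_lt with rfl | hx
  · simp [signSqrt, h0]
  · simp [signSqrt, Real.sign_of_pos hx]

lemma signSqrt_eqOn_Iic (h0 : f 0 = 0) : EqOn (signSqrt f) (fun x => -√(f x)) (Iic 0) := by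
  intro x (hx : x ≤ 0)
  rcases hx.eq_or_lt with rfl | hx
  · simp [signSqrt, h0]
  · simp [signSqrt, Real.sign_of_neg hx]

lemma strictMonoOn_signSqrt (ha : a < 0) (h0 : f 0 = 0) (hanti : StrictAntiOn f (Ioc a 0))
    (hmono : StrictMonoOn f (Ici 0)) : StrictMonoOn (signSqrt f) (Ioi a) := by
  have hleft : StrictMonoOn (signSqrt f) (Ioc a 0) := by
    refine StrictMonoOn.congr (fun x hx y hy hxy => ?_) ((signSqrt_eqOn_Iic h0).mono
      Ioc_subset_Iic_self).symm
    have hfy : 0 ≤ f y := h0 ▸ hanti.antitoneOn hy ⟨ha, le_rfl⟩ hy.2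
    exact neg_lt_neg (Real.sqrt_lt_sqrt hfy (hanti hx hy hxy))
  have hright : StrictMonoOn (signSqrt f) (Ici 0) := by
    refine StrictMonoOn.congr (fun x hx y hy hxy => ?_) (signSqrt_eqOn_Ici h0).symm
    have hfx : 0 ≤ f x := h0 ▸ hmono.monotoneOn self_mem_Ici hx hx
    exact Real.sqrt_lt_sqrt hfx (hmono hx hy hxy)
  rw [← Ioc_union_Ici_eq_Ioi ha]
  exact hleft.union hright ⟨right_mem_Ioc.2 ha, fun _ hx => hx.2⟩ isLeast_Ici

lemma surjOn_signSqrt (ha : a < 0) (h0 : f 0 = 0) (hf : ContinuousOn f (Ioi a))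
    (hleft : Tendsto f (𝓝[>] a) atTop) (hright : Tendsto f atTop atTop) :
    SurjOn (signSqrt f) (Ioi a) univ := by
  intro c _
  rcases le_total 0 c with hc | hc
  · obtain ⟨x, hx, hfx⟩ : c ^ 2 ∈ f '' Ici 0 :=
      intermediate_value_Ici (hf.mono fun x (hx : 0 ≤ x) => ha.trans_le hx) hright
        (by simp [h0, sq_nonneg])
    refine ⟨x, ha.trans_le hx, ?_⟩
    rw [signSqrt_eqOn_Ici h0 hx]
    simp only [hfx, Real.sqrt_sq hc]
  · have hl : 𝓝[>] a ≤ 𝓟 (Ioc a 0) := le_principal_iff.2 (Ioc_mem_nhdsGT ha)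
    obtain ⟨x, hx, hfx⟩ : c ^ 2 ∈ f '' Ioc a 0 :=
      isPreconnected_Ioc.intermediate_value_Ici ⟨ha, le_rfl⟩ hl
        (hf.mono Ioc_subset_Ioi_self) hleft (by simp [h0, sq_nonneg])
    refine ⟨x, hx.1, ?_⟩
    rw [signSqrt_eqOn_Iic h0 hx.2]
    simp only [hfx, Real.sqrt_sq_eq_abs, abs_of_nonpos hc, neg_neg]

end SignSqrt

/-- The paper's `g`; its `v` is `signSqrt logGap`. -/
def logGap (x : ℝ) : ℝ := x - log (1 + x)

lemma logGap_zero : logGap 0 = 0 := by simp [logGap]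

lemma continuousOn_logGap : ContinuousOn logGap (Ioi (-1)) := by
  refine continuousOn_id.sub (ContinuousOn.log (by fun_prop) fun x (hx : -1 < x) => ?_)
  linarith

lemma hasDerivAt_logGap {x : ℝ} (hx : -1 < x) : HasDerivAt logGap (x / (1 + x)) x := by
  have hpos : 1 + x ≠ 0 := by linarith
  have hlog := ((hasDerivAt_id' x).const_add 1).log hpos
  have hderiv : 1 - 1 / (1 + x) = x / (1 + x) := by field_simp; ring
  exact hderiv ▸ (hasDerivAt_id' x).sub hlog

lemma strictAntiOn_logGap : StrictAntiOn logGap (Ioc (-1) 0) := by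
  refine strictAntiOn_of_deriv_neg (convex_Ioc _ _)
    (continuousOn_logGap.mono Ioc_subset_Ioi_self) fun x hx => ?_
  rw [interior_Ioc] at hx
  rw [(hasDerivAt_logGap hx.1).deriv]
  exact div_neg_of_neg_of_pos hx.2 (by linarith [hx.1])

lemma strictMonoOn_logGap : StrictMonoOn logGap (Ici 0) := by
  refine strictMonoOn_of_deriv_pos (convex_Ici _)
    (continuousOn_logGap.mono fun x (hx : 0 ≤ x) => mem_Ioi.2 (by linarith)) fun x hx => ?_
  rw [interior_Ici] at hx
  rw [(hasDerivAt_logGap (by linarith [mem_Ioi.1 hx])).deriv]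
  exact div_pos hx (by linarith [mem_Ioi.1 hx])

lemma tendsto_logGap_nhdsGT : Tendsto logGap (𝓝[>] (-1)) atTop := by
  have hshift : Tendsto (fun x : ℝ => 1 + x) (𝓝[>] (-1)) (𝓝[>] 0) := by
    refine tendsto_nhdsWithin_of_tendsto_nhds_of_eventually_within _ ?_ ?_
    · exact tendsto_nhdsWithin_of_tendsto_nhds
        (by simpa using (continuous_const_add (1 : ℝ)).tendsto (-1))
    · filter_upwards [self_mem_nhdsWithin] with x (hx : -1 < x)
      exact mem_Ioi.2 (by linarith)
  have hid : Tendsto (fun x : ℝ => x) (𝓝[>] (-1)) (𝓝 (-1)) := nhdsWithin_le_nhds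
  exact hid.add_atTop (tendsto_neg_atBot_atTop.comp (tendsto_log_nhdsGT_zero.comp hshift))

lemma half_add_le_logGap {x : ℝ} (hx : -1 < x) : x / 2 + (1 / 2 - log 2) ≤ logGap x := by
  have hhalf : 0 < (1 + x) / 2 := by linarith
  have hsplit : log (1 + x) = log 2 + log ((1 + x) / 2) := by
    rw [← log_mul two_ne_zero hhalf.ne']
    ring_nf
  have := log_le_sub_one_of_pos hhalf
  rw [logGap]
  linarith

lemma tendsto_logGap_atTop : Tendsto logGap atTop atTop := by
  refine tendsto_atTop_mono' _ ?_ (tendsto_atTop_add_const_right _ (1 / 2 - log 2)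
    ((tendsto_id (x := atTop)).atTop_div_const (two_pos : (0 : ℝ) < 2)))
  filter_upwards [eventually_gt_atTop (-1)] with x hx
  exact half_add_le_logGap hx

end

theorem stmt_3 :
    StrictMonoOn (fun x : ℝ => Real.sign x * Real.sqrt (x - Real.log (1 + x))) (Set.Ioi (-1)) ∧
    ContinuousOn (fun x : ℝ => Real.sign x * Real.sqrt (x - Real.log (1 + x))) (Set.Ioi (-1)) ∧
    Set.BijOn (fun x : ℝ => Real.sign x * Real.sqrt (x - Real.log (1 + x)))
      (Set.Ioi (-1)) Set.univ := by
  have hmono : StrictMonoOn (signSqrt logGap) (Ioi (-1)) :=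
    strictMonoOn_signSqrt (by norm_num) logGap_zero strictAntiOn_logGap strictMonoOn_logGap
  have hsurj : SurjOn (signSqrt logGap) (Ioi (-1)) univ :=
    surjOn_signSqrt (by norm_num) logGap_zero continuousOn_logGap tendsto_logGap_nhdsGT
      tendsto_logGap_atTop
  have hcont : ContinuousOn (signSqrt logGap) (Ioi (-1)) := fun x hx =>
    (hmono.continuousAt_of_image_mem_nhds (isOpen_Ioi.mem_nhds hx)
      (mem_of_superset univ_mem hsurj)).continuousWithinAt
  exact ⟨hmono, hcont, mapsTo_univ _ _, hmono.injOn, hsurj⟩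
end

section
/- With y defined as y(v) = v/f(v) for v ≠ 0 and y(0) = √2/2, where f is the inverse of v(x) = sgn(x)·√(x - ln(1+x)), there exists a constant C > 0 such that 0 < y(v) ≤ C(|v| + 1) for all real v. -/
open Real Set

theorem stmt_6 (f : ℝ → ℝ)
    (hf : ∀ u : ℝ, f u ∈ Set.Ioi (-1 : ℝ) ∧
      Real.sign (f u) * Real.sqrt (f u - Real.log (1 + f u)) = u)
    (y : ℝ → ℝ)
    (hy : ∀ v : ℝ, y v = if v = 0 then Real.sqrt 2 / 2 else v / f v) :
    ∃ C : ℝ, 0 < C ∧ ∀ v : ℝ, 0 < y v ∧ y v ≤ C * (|v| + 1) := by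
  refine ⟨2, by norm_num, fun v => ?_⟩
  obtain ⟨h1, h2⟩ := hf v
  simp only [Set.mem_Ioi] at h1
  have h1' : (0:ℝ) < 1 + f v := by linarith
  have hnn : 0 ≤ f v - Real.log (1 + f v) := by
    have := Real.log_le_sub_one_of_pos h1'
    linarith
  have hlog : 1 - (1 + f v)⁻¹ ≤ Real.log (1 + f v) :=
    Real.one_sub_inv_le_log_of_pos h1'
  by_cases hv : v = 0
  · rw [hy v, if_pos hv, hv]
    constructor
    · positivity
    · have : Real.sqrt 2 ≤ 2 := by
        nlinarith [Real.sq_sqrt (show (0:ℝ) ≤ 2 by norm_num), Real.sqrt_nonneg 2]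
      simp only [abs_zero]
      nlinarith
  rw [hy v, if_neg hv]
  rcases lt_or_gt_of_ne hv with hvneg | hvpos
  · -- v < 0, so f v < 0
    have hfneg : f v < 0 := by
      by_contra h
      push_neg at h
      rcases eq_or_lt_of_le h with he | hl
      · rw [← he] at h2; simp at h2; exact hv h2.symm
      · rw [Real.sign_of_pos hl, one_mul] at h2
        have := Real.sqrt_nonneg (f v - Real.log (1 + f v))
        linarith
    rw [Real.sign_of_neg hfneg] at h2
    have hsq : Real.sqrt (f v - Real.log (1 + f v)) = -v := by linarith
    have hsq2 : f v - Real.log (1 + f v) = v ^ 2 := by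
      have := Real.sq_sqrt hnn
      rw [hsq] at this; nlinarith
    -- key inequality: v^2 * (1 + f v) ≤ f v ^ 2
    have hkey : v ^ 2 * (1 + f v) ≤ f v ^ 2 := by
      have h3 : v ^ 2 ≤ f v - (1 - (1 + f v)⁻¹) := by linarith
      have h4 : f v - (1 - (1 + f v)⁻¹) = f v ^ 2 / (1 + f v) := by
        field_simp; ring
      rw [h4] at h3
      nlinarith [mul_le_mul_of_nonneg_right h3 h1'.le,
        div_mul_cancel₀ (f v ^ 2) (ne_of_gt h1')]
    constructor
    · exact div_pos_of_neg_of_neg hvneg hfneg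
    · rw [div_le_iff_of_neg hfneg]
      rw [abs_of_neg hvneg]
      -- goal: 2 * (-v + 1) * f v ≤ v
      rcases le_or_gt (-f v) (1/2) with hb | hb
      · -- 1 + f v ≥ 1/2, so v^2 ≤ 2 f v ^2
        have : v ^ 2 ≤ 2 * f v ^ 2 := by nlinarith
        nlinarith [sq_nonneg (v - 2 * f v), sq_nonneg (v + 2 * f v)]
      · nlinarith
  · -- v > 0, so f v > 0
    have hfpos : 0 < f v := by
      by_contra h
      push_neg at h
      rcases eq_or_lt_of_le h with he | hl
      · rw [he] at h2; simp at h2; exact hv h2.symm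
      · rw [Real.sign_of_neg hl, neg_one_mul] at h2
        have := Real.sqrt_nonneg (f v - Real.log (1 + f v))
        linarith
    rw [Real.sign_of_pos hfpos, one_mul] at h2
    have hsq2 : f v - Real.log (1 + f v) = v ^ 2 := by
      have := Real.sq_sqrt hnn
      rw [h2] at this; nlinarith
    have hkey : v ^ 2 * (1 + f v) ≤ f v ^ 2 := by
      have h3 : v ^ 2 ≤ f v - (1 - (1 + f v)⁻¹) := by linarith
      have h4 : f v - (1 - (1 + f v)⁻¹) = f v ^ 2 / (1 + f v) := by
        field_simp; ring
      rw [h4] at h3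
      nlinarith [mul_le_mul_of_nonneg_right h3 h1'.le,
        div_mul_cancel₀ (f v ^ 2) (ne_of_gt h1')]
    have hle : v ≤ f v := by nlinarith
    constructor
    · exact div_pos hvpos hfpos
    · rw [div_le_iff₀ hfpos, abs_of_pos hvpos]
      nlinarith
end

section
/- For every s > 0, Γ(s+1) = (s/e)^s · √s · ∫_0^∞ 2·(y(u/√s) + y(-u/√s)) · e^{-u²} du, where y(v) = v/f(v) for v ≠ 0, y(0) = √2/2, and f is the inverse of x ↦ sgn(x)·√(x - ln(1+x)). -/
/-!
Substitute `v = φ (w - 1)` with `w ∈ (0, ∞)`. Since `φ (t) ^ 2 = t - log (1 + t)`, the Jacobian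
`φ' (t) = t / (2 (1 + t) φ (t))` cancels the factor `2 φ (t) / t = 2 v / f v`, and the Gaussian
`e^{-s v²}` becomes `e^s w^s e^{-s w}`. Hence `∫ 2 (v / f v) e^{-s v²} dv` over `ℝ` equals
`e^s ∫ w^{s-1} e^{-s w} dw = e^s s^{-s} Γ(s)`. Rescaling `u = √s v` and folding the integral over
`ℝ` onto `(0, ∞)` gives `Γ(s + 1) = s Γ(s)` in the stated form.
-/

open Real Set MeasureTheory

lemma integrableOn_rpow_mul_exp_neg_mul {s : ℝ} (hs : 0 < s) :
    IntegrableOn (fun w => w ^ (s - 1) * exp (-(s * w))) (Ioi 0) :=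
  (integrableOn_rpow_mul_exp_neg_mul_rpow (s := s - 1) (p := 1) (by linarith) one_pos hs).congr_fun
    (fun w _ => by simp) measurableSet_Ioi

theorem integral_Ioi_add_comp_neg {E : Type*} [NormedAddCommGroup E] [NormedSpace ℝ E]
    {g : ℝ → E} (hg : Integrable g) : ∫ u in Ioi 0, (g u + g (-u)) = ∫ u, g u := by
  rw [integral_add hg.integrableOn hg.comp_neg.integrableOn, integral_comp_neg_Ioi, neg_zero,
    add_comm, intervalIntegral.integral_Iic_add_Ioi hg.integrableOn hg.integrableOn]

namespace StirlingGamma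

noncomputable def gap (t : ℝ) : ℝ := t - log (1 + t)

noncomputable def phi (t : ℝ) : ℝ := sign t * √(gap t)

section Phi

variable {t : ℝ}

lemma gap_nonneg (ht : -1 < t) : 0 ≤ gap t := by
  have := log_le_sub_one_of_pos (show 0 < 1 + t by linarith)
  unfold gap; linarith

lemma gap_pos (ht : -1 < t) (ht0 : t ≠ 0) : 0 < gap t := by
  have := log_lt_sub_one_of_pos (show 0 < 1 + t by linarith) (by simpa using ht0)
  unfold gap; linarith

lemma hasDerivAt_gap (ht : -1 < t) : HasDerivAt gap (t / (1 + t)) t := by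
  have h1 : 1 + t ≠ 0 := by linarith
  have hlog := ((hasDerivAt_id' t).const_add 1).log h1
  refine ((hasDerivAt_id' t).sub hlog).congr_deriv ?_
  field_simp
  ring

lemma gap_strictMonoOn : StrictMonoOn gap (Ici 0) := by
  refine strictMonoOn_of_deriv_pos (convex_Ici 0) (fun x hx => ?_) (fun x hx => ?_)
  · exact (hasDerivAt_gap (by simp at hx; linarith)).continuousAt.continuousWithinAt
  · rw [interior_Ici, mem_Ioi] at hx
    rw [(hasDerivAt_gap (by linarith)).deriv]
    positivity

lemma gap_strictAntiOn : StrictAntiOn gap (Ioc (-1) 0) := by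
  refine strictAntiOn_of_deriv_neg (convex_Ioc (-1) 0) (fun x hx => ?_) (fun x hx => ?_)
  · exact (hasDerivAt_gap hx.1).continuousAt.continuousWithinAt
  · rw [interior_Ioc] at hx
    rw [(hasDerivAt_gap hx.1).deriv]
    exact div_neg_of_neg_of_pos hx.2 (by linarith [hx.1])

lemma phi_of_nonneg (ht : 0 ≤ t) : phi t = √(gap t) := by
  rcases ht.lt_or_eq with ht | rfl
  · simp [phi, sign_of_pos ht]
  · simp [phi, gap]

lemma phi_of_nonpos (ht : t ≤ 0) : phi t = -√(gap t) := by
  rcases ht.lt_or_eq with ht | rfl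
  · simp [phi, sign_of_neg ht]
  · simp [phi, gap]

lemma phi_sq (ht : -1 < t) : phi t ^ 2 = gap t := by
  rcases le_total 0 t with h | h
  · rw [phi_of_nonneg h, sq_sqrt (gap_nonneg ht)]
  · rw [phi_of_nonpos h, neg_sq, sq_sqrt (gap_nonneg ht)]

lemma phi_strictMonoOn : StrictMonoOn phi (Ioi (-1)) := by
  have hneg : StrictMonoOn phi (Ioc (-1) 0) := fun a ha b hb hab => by
    rw [phi_of_nonpos ha.2, phi_of_nonpos hb.2, neg_lt_neg_iff]
    exact sqrt_lt_sqrt (gap_nonneg hb.1) (gap_strictAntiOn ha hb hab)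
  have hpos : StrictMonoOn phi (Ici 0) := fun a ha b hb hab => by
    rw [phi_of_nonneg ha, phi_of_nonneg hb]
    exact sqrt_lt_sqrt (gap_nonneg (by simp at ha; linarith)) (gap_strictMonoOn ha hb hab)
  have := hneg.union hpos ⟨⟨by norm_num, le_rfl⟩, fun x hx => hx.2⟩ isLeast_Ici
  rwa [Ioc_union_Ici_eq_Ioi (by norm_num)] at this

lemma phi_div_self_pos (ht : -1 < t) (ht0 : t ≠ 0) : 0 < phi t / t := by
  have h0 : phi 0 = 0 := by simp [phi]
  rcases ht0.lt_or_gt with h | h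
  · exact div_pos_of_neg_of_neg (h0 ▸ phi_strictMonoOn ht (by norm_num) h) h
  · exact div_pos (h0 ▸ phi_strictMonoOn (by norm_num) ht h) h

lemma phi_ne_zero (ht : -1 < t) (ht0 : t ≠ 0) : phi t ≠ 0 :=
  (div_ne_zero_iff.1 (phi_div_self_pos ht ht0).ne').1

lemma hasDerivAt_phi (ht : -1 < t) (ht0 : t ≠ 0) :
    HasDerivAt phi (t / (2 * (1 + t) * phi t)) t := by
  have hsqrt := (hasDerivAt_gap ht).sqrt (gap_pos ht ht0).ne'
  rcases ht0.lt_or_gt with h | h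
  · have heq : phi =ᶠ[nhds t] fun x => -√(gap x) :=
      Filter.eventually_of_mem (Iio_mem_nhds h) fun x hx => phi_of_nonpos (le_of_lt hx)
    refine (hsqrt.neg.congr_of_eventuallyEq heq).congr_deriv ?_
    rw [phi_of_nonpos h.le]
    field_simp
  · have heq : phi =ᶠ[nhds t] fun x => √(gap x) :=
      Filter.eventually_of_mem (Ioi_mem_nhds h) fun x hx => phi_of_nonneg (le_of_lt hx)
    refine (hsqrt.congr_of_eventuallyEq heq).congr_deriv ?_
    rw [phi_of_nonneg h.le]
    field_simp

end Phi

section Substitution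

variable {f : ℝ → ℝ} {s : ℝ}

lemma leftInvOn_phi (hf : ∀ u, f u ∈ Ioi (-1) ∧ phi (f u) = u) : LeftInvOn f phi (Ioi (-1)) :=
  fun _ ht => phi_strictMonoOn.injOn (hf _).1 ht (hf _).2

lemma image_phi_sub_one (hf : ∀ u, f u ∈ Ioi (-1) ∧ phi (f u) = u) :
    (fun w => phi (w - 1)) '' (Ioi 0 \ {1}) = {0}ᶜ := by
  ext u
  constructor
  · rintro ⟨w, ⟨hw, hw1⟩, rfl⟩
    exact phi_ne_zero (by simp at hw; linarith) (sub_ne_zero.2 hw1)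
  · intro hu
    obtain ⟨hfu, hphi⟩ := hf u
    refine ⟨1 + f u, ⟨?_, fun h => hu ?_⟩, by simpa using hphi⟩
    · simp only [mem_Ioi] at hfu ⊢; linarith
    · have : f u = 0 := by simpa using h
      simpa [this, phi] using hphi.symm

lemma injOn_phi_sub_one : InjOn (fun w => phi (w - 1)) (Ioi 0 \ {1}) := fun a ha b hb h => by
  have := phi_strictMonoOn.injOn (show -1 < a - 1 by simp at ha; linarith)
    (show -1 < b - 1 by simp at hb; linarith) h
  linarith

lemma hasDerivAt_phi_sub_one {w : ℝ} (hw : 0 < w) (hw1 : w ≠ 1) :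
    HasDerivAt (fun w => phi (w - 1)) ((w - 1) / (2 * w * phi (w - 1))) w := by
  have := hasDerivAt_phi (t := w - 1) (by linarith) (sub_ne_zero.2 hw1)
  simpa using this.comp_sub_const w 1

lemma abs_deriv_phi_sub_one_smul (hf : ∀ u, f u ∈ Ioi (-1) ∧ phi (f u) = u)
    {w : ℝ} (hw : 0 < w) (hw1 : w ≠ 1) :
    |(w - 1) / (2 * w * phi (w - 1))| •
        (2 * (phi (w - 1) / f (phi (w - 1))) * exp (-(s * phi (w - 1) ^ 2))) =
      exp s * (w ^ (s - 1) * exp (-(s * w))) := by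
  have ht : -1 < w - 1 := by linarith
  have ht0 : w - 1 ≠ 0 := sub_ne_zero.2 hw1
  have hq := phi_div_self_pos ht ht0
  have hphi := phi_ne_zero ht ht0
  have hderiv : (w - 1) / (2 * w * phi (w - 1)) = 1 / (2 * w * (phi (w - 1) / (w - 1))) := by
    field_simp
  have hexp : exp (-(s * phi (w - 1) ^ 2)) = exp s * (w ^ s * exp (-(s * w))) := by
    rw [phi_sq ht, gap, rpow_def_of_pos hw, ← exp_add, ← exp_add]
    congr 1
    ring_nf
  rw [smul_eq_mul, leftInvOn_phi hf ht, hderiv, abs_of_pos (by positivity), hexp,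
    rpow_sub_one hw.ne']
  field_simp

theorem integrable_div_mul_exp (hf : ∀ u, f u ∈ Ioi (-1) ∧ phi (f u) = u) (hs : 0 < s) :
    Integrable fun v => 2 * (v / f v) * exp (-(s * v ^ 2)) := by
  have hS : MeasurableSet (Ioi (0 : ℝ) \ {1}) := measurableSet_Ioi.diff (measurableSet_singleton 1)
  rw [← restrict_compl_singleton (μ := volume) 0, ← IntegrableOn, ← image_phi_sub_one hf,
    integrableOn_image_iff_integrableOn_abs_deriv_smul hS
      (fun w hw => (hasDerivAt_phi_sub_one hw.1 hw.2).hasDerivWithinAt) injOn_phi_sub_one]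
  refine IntegrableOn.congr_fun ?_ (fun w hw => (abs_deriv_phi_sub_one_smul hf hw.1 hw.2).symm) hS
  exact IntegrableOn.mono_set ((integrableOn_rpow_mul_exp_neg_mul hs).const_mul _) sdiff_subset

theorem integral_div_mul_exp (hf : ∀ u, f u ∈ Ioi (-1) ∧ phi (f u) = u) (hs : 0 < s) :
    ∫ v, 2 * (v / f v) * exp (-(s * v ^ 2)) = exp s * ((1 / s) ^ s * Gamma s) := by
  have hS : MeasurableSet (Ioi (0 : ℝ) \ {1}) := measurableSet_Ioi.diff (measurableSet_singleton 1)
  rw [← restrict_compl_singleton (μ := volume) 0, ← image_phi_sub_one hf,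
    integral_image_eq_integral_abs_deriv_smul hS
      (fun w hw => (hasDerivAt_phi_sub_one hw.1 hw.2).hasDerivWithinAt) injOn_phi_sub_one,
    setIntegral_congr_fun hS (fun w hw => abs_deriv_phi_sub_one_smul hf hw.1 hw.2),
    setIntegral_congr_set (sdiff_null_ae_eq_self (measure_singleton 1)), integral_const_mul,
    integral_rpow_mul_exp_neg_mul_Ioi hs hs]

end Substitution

end StirlingGamma

theorem stmt_7 (f : ℝ → ℝ)
    (hf : ∀ u : ℝ, f u ∈ Set.Ioi (-1 : ℝ) ∧
      Real.sign (f u) * Real.sqrt (f u - Real.log (1 + f u)) = u)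
    (y : ℝ → ℝ)
    (hy : ∀ v : ℝ, y v = if v = 0 then Real.sqrt 2 / 2 else v / f v)
    (s : ℝ) (hs : 0 < s) :
    Real.Gamma (s + 1) =
      (s / Real.exp 1) ^ s * Real.sqrt s *
        ∫ u in Set.Ioi (0 : ℝ),
          2 * (y (u / Real.sqrt s) + y (-(u / Real.sqrt s))) * Real.exp (-u ^ 2) := by
  set g : ℝ → ℝ := fun v => 2 * y v * exp (-(s * v ^ 2))
  have hg : g =ᵐ[volume] fun v => 2 * (v / f v) * exp (-(s * v ^ 2)) := by
    filter_upwards [Measure.ae_ne volume 0] with v hv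
    simp [g, hy, hv]
  have hrescale : ∫ u in Ioi 0, 2 * (y (u / √s) + y (-(u / √s))) * exp (-u ^ 2) =
      √s * ∫ v in Ioi 0, (g v + g (-v)) := by
    have := integral_comp_mul_left_Ioi (fun v => g v + g (-v)) 0 (inv_pos.2 (sqrt_pos.2 hs))
    rw [mul_zero, inv_inv, smul_eq_mul] at this
    rw [← this]
    refine integral_congr_ae (Filter.Eventually.of_forall fun u => ?_)
    have hsq : s * (u / √s) ^ 2 = u ^ 2 := by
      rw [div_pow, sq_sqrt hs.le]
      field_simp
    simp only [g, neg_sq, hsq, inv_mul_eq_div]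
    ring
  rw [hrescale,
    integral_Ioi_add_comp_neg ((StirlingGamma.integrable_div_mul_exp hf hs).congr hg.symm),
    integral_congr_ae hg, StirlingGamma.integral_div_mul_exp hf hs, Gamma_add_one hs.ne',
    div_rpow hs.le (exp_pos 1).le, exp_one_rpow, one_div, inv_rpow hs.le]
  field_simp
  rw [sq_sqrt hs.le]
end

section
/- lim_{s → ∞} ∫_0^∞ 2·(y(u/√s) + y(-u/√s))·e^{-u²} du = √(2π), where y(v) = v/f(v) for v ≠ 0, y(0) = √2/2, and f is the inverse of x ↦ sgn(x)·√(x - ln(1+x)). -/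
/-!
Write `g x = x - log (1 + x)`. The hypothesis on `f` says that `f u` has the sign of `u` and
`g (f u) = u ^ 2`. The elementary bounds `x ^ 2 / (2 (1 + x)) ≤ g x ≤ x ^ 2 / 2` for `x ≥ 0`
(reversed for `-1 < x ≤ 0`) turn into `|y v + y (-v) - √2| ≤ v` for `v ≥ 0`. So the integrand
tends to `2 √2 e^{-u²}`, is dominated by `2 (√2 + u) e^{-u²}` once `s ≥ 1`, and dominated
convergence with `∫₀^∞ e^{-u²} = √π / 2` gives the limit. Measurability of `y` comes from the
monotonicity of `f`, which holds because `g` decreases on `(-1, 0]` and increases on `[0, ∞)`.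
-/

open Real Set Filter Topology MeasureTheory

lemma hasDerivAt_sub_log_one_add {x : ℝ} (hx : -1 < x) :
    HasDerivAt (fun x => x - log (1 + x)) (x / (1 + x)) x := by
  have hx' : 1 + x ≠ 0 := by linarith
  refine ((hasDerivAt_id' x).sub (((hasDerivAt_id' x).const_add 1).log hx')).congr_deriv ?_
  field_simp
  ring

lemma monotoneOn_Ioi_of_hasDerivAt_nonneg {a : ℝ} {F F' : ℝ → ℝ}
    (hF : ∀ x, a < x → HasDerivAt F (F' x) x) (hF' : ∀ x, a < x → 0 ≤ F' x) :
    MonotoneOn F (Ioi a) :=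
  monotoneOn_of_hasDerivWithinAt_nonneg (convex_Ioi a)
    (fun x hx => (hF x hx).continuousAt.continuousWithinAt)
    (fun x hx => (hF x (by simpa using hx)).hasDerivWithinAt)
    (fun x hx => hF' x (by simpa using hx))

lemma monotoneOn_sq_div_two_sub_sub_log_one_add :
    MonotoneOn (fun x => x ^ 2 / 2 - (x - log (1 + x))) (Ioi (-1)) := by
  refine monotoneOn_Ioi_of_hasDerivAt_nonneg (F' := fun x => x ^ 2 / (1 + x)) (fun x hx => ?_)
    (fun x hx => div_nonneg (sq_nonneg x) (by linarith))
  have hx' : 1 + x ≠ 0 := by linarith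
  refine (((hasDerivAt_pow 2 x).div_const 2).sub (hasDerivAt_sub_log_one_add hx)).congr_deriv ?_
  field_simp
  ring

lemma monotoneOn_sub_log_one_add_sub_sq_div :
    MonotoneOn (fun x => x - log (1 + x) - x ^ 2 / (2 * (1 + x))) (Ioi (-1)) := by
  refine monotoneOn_Ioi_of_hasDerivAt_nonneg (F' := fun x => x ^ 2 / (2 * (1 + x) ^ 2))
    (fun x hx => ?_) (fun x _ => by positivity)
  have hx' : 1 + x ≠ 0 := by linarith
  have hden : HasDerivAt (fun x => 2 * (1 + x)) 2 x := by
    simpa using ((hasDerivAt_id x).const_add 1).const_mul 2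
  refine ((hasDerivAt_sub_log_one_add hx).sub
    ((hasDerivAt_pow 2 x).div hden (by simpa))).congr_deriv ?_
  field_simp
  ring

lemma sub_log_one_add_le_sq_div_two {x : ℝ} (hx : 0 ≤ x) : x - log (1 + x) ≤ x ^ 2 / 2 := by
  have := monotoneOn_sq_div_two_sub_sub_log_one_add (by norm_num : (0 : ℝ) ∈ Ioi (-1))
    (by simp only [mem_Ioi]; linarith) hx
  simpa using this

lemma sq_div_two_le_sub_log_one_add {x : ℝ} (hx₁ : -1 < x) (hx : x ≤ 0) :
    x ^ 2 / 2 ≤ x - log (1 + x) := by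
  have := monotoneOn_sq_div_two_sub_sub_log_one_add hx₁ (by norm_num : (0 : ℝ) ∈ Ioi (-1)) hx
  simpa using this

lemma sq_div_le_sub_log_one_add {x : ℝ} (hx : 0 ≤ x) :
    x ^ 2 / (2 * (1 + x)) ≤ x - log (1 + x) := by
  have := monotoneOn_sub_log_one_add_sub_sq_div (by norm_num : (0 : ℝ) ∈ Ioi (-1))
    (by simp only [mem_Ioi]; linarith) hx
  simpa using this

lemma sub_log_one_add_le_sq_div {x : ℝ} (hx₁ : -1 < x) (hx : x ≤ 0) :
    x - log (1 + x) ≤ x ^ 2 / (2 * (1 + x)) := by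
  have := monotoneOn_sub_log_one_add_sub_sq_div hx₁ (by norm_num : (0 : ℝ) ∈ Ioi (-1)) hx
  simpa using this

lemma strictMonoOn_sub_log_one_add : StrictMonoOn (fun x => x - log (1 + x)) (Ici 0) :=
  strictMonoOn_of_hasDerivWithinAt_pos (convex_Ici 0)
    (fun x (hx : 0 ≤ x) =>
      (hasDerivAt_sub_log_one_add (by linarith)).continuousAt.continuousWithinAt)
    (fun x hx => (hasDerivAt_sub_log_one_add
      (by rw [interior_Ici] at hx; exact neg_one_lt_zero.trans hx)).hasDerivWithinAt)
    (fun x hx => by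
      rw [interior_Ici, mem_Ioi] at hx
      positivity)

lemma strictAntiOn_sub_log_one_add : StrictAntiOn (fun x => x - log (1 + x)) (Ioc (-1) 0) :=
  strictAntiOn_of_hasDerivWithinAt_neg (convex_Ioc (-1) 0)
    (fun x hx => (hasDerivAt_sub_log_one_add hx.1).continuousAt.continuousWithinAt)
    (fun x hx => by
      rw [interior_Ioc] at hx
      exact (hasDerivAt_sub_log_one_add hx.1).hasDerivWithinAt)
    (fun x hx => by
      rw [interior_Ioc] at hx
      exact div_neg_of_neg_of_pos hx.2 (by linarith [hx.1]))

lemma sub_log_one_add_pos {x : ℝ} (hx₁ : -1 < x) (hx : x ≠ 0) : 0 < x - log (1 + x) := by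
  have := log_lt_sub_one_of_pos (by linarith : 0 < 1 + x) (by simpa using hx)
  linarith

lemma abs_add_sub_sqrt_two_le {p q v : ℝ} (hp : 0 < p) (hq : 0 < q)
    (hp₁ : 2 * p ^ 2 ≤ 1) (hp₂ : 1 ≤ 2 * p ^ 2 + 2 * p * v)
    (hq₁ : 1 ≤ 2 * q ^ 2) (hq₂ : 2 * q ^ 2 ≤ 1 + 2 * q * v) :
    |p + q - √2| ≤ v := by
  set r := √2 / 2
  have hr : 0 < r := by positivity
  have hr2 : 2 * r ^ 2 = 1 := by simp only [r, div_pow, sq_sqrt zero_le_two]; norm_num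
  have hp_le : p ≤ r := by nlinarith
  have hr_le : r ≤ q := by nlinarith
  -- `hp₂` and `hq₂` read `(r - p) (r + p) ≤ p v` and `(q - r) (q + r) ≤ q v`
  have hp_ge : r - p ≤ v := by nlinarith
  have hq_le : q - r ≤ v := by nlinarith
  rw [abs_le, show √2 = r + r by ring]
  constructor <;> linarith

lemma div_bounds_of_sub_log_one_add_eq_sq_of_pos {x v : ℝ} (hx : 0 < x)
    (hg : x - log (1 + x) = v ^ 2) :
    2 * (v / x) ^ 2 ≤ 1 ∧ 1 ≤ 2 * (v / x) ^ 2 + 2 * (v / x) * v := by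
  have h₁ := sub_log_one_add_le_sq_div_two hx.le
  have h₂ := sq_div_le_sub_log_one_add hx.le
  rw [hg, div_le_iff₀ (by positivity)] at h₂
  rw [hg] at h₁
  set p := v / x
  have hv : v = p * x := (div_mul_cancel₀ v hx.ne').symm
  rw [hv] at h₁ h₂ ⊢
  constructor <;> nlinarith [sq_pos_of_pos hx]

lemma div_bounds_of_sub_log_one_add_eq_sq_of_neg {x u : ℝ} (hx₁ : -1 < x) (hx : x < 0)
    (hg : x - log (1 + x) = u ^ 2) :
    1 ≤ 2 * (u / x) ^ 2 ∧ 2 * (u / x) ^ 2 ≤ 1 - 2 * (u / x) * u := by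
  have h₁ := sq_div_two_le_sub_log_one_add hx₁ hx.le
  have h₂ := sub_log_one_add_le_sq_div hx₁ hx.le
  rw [hg, le_div_iff₀ (by linarith)] at h₂
  rw [hg] at h₁
  set q := u / x
  have hu : u = q * x := (div_mul_cancel₀ u hx.ne).symm
  rw [hu] at h₁ h₂ ⊢
  constructor <;> nlinarith [sq_pos_of_neg hx]

section SignedRootInverse

variable {f : ℝ → ℝ}
  (hf : ∀ u : ℝ, f u ∈ Ioi (-1 : ℝ) ∧ Real.sign (f u) * √(f u - log (1 + f u)) = u)
include hf

lemma pos_iff_of_sign_mul_sqrt_eq (u : ℝ) : 0 < f u ↔ 0 < u := by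
  obtain ⟨hu₁, hu⟩ := hf u
  rcases lt_trichotomy (f u) 0 with h | h | h
  · rw [Real.sign_of_neg h] at hu
    have := sqrt_nonneg (f u - log (1 + f u))
    constructor <;> intro <;> linarith
  · rw [h, Real.sign_zero, zero_mul] at hu
    rw [h, ← hu]
  · rw [Real.sign_of_pos h, one_mul] at hu
    have := sqrt_pos.2 (sub_log_one_add_pos hu₁ h.ne')
    constructor <;> intro <;> linarith

lemma neg_iff_of_sign_mul_sqrt_eq (u : ℝ) : f u < 0 ↔ u < 0 := by
  obtain ⟨hu₁, hu⟩ := hf u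
  rcases lt_trichotomy (f u) 0 with h | h | h
  · rw [Real.sign_of_neg h] at hu
    have := sqrt_pos.2 (sub_log_one_add_pos hu₁ h.ne)
    constructor <;> intro <;> linarith
  · rw [h, Real.sign_zero, zero_mul] at hu
    rw [h, ← hu]
  · rw [Real.sign_of_pos h, one_mul] at hu
    have := sqrt_nonneg (f u - log (1 + f u))
    constructor <;> intro <;> linarith

lemma sub_log_one_add_eq_sq_of_sign_mul_sqrt_eq (u : ℝ) : f u - log (1 + f u) = u ^ 2 := by
  obtain ⟨hu₁, hu⟩ := hf u
  have hg : 0 ≤ f u - log (1 + f u) := by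
    linarith [log_le_sub_one_of_pos (by linarith [mem_Ioi.1 hu₁] : 0 < 1 + f u)]
  have hu₂ : u ^ 2 = Real.sign (f u) ^ 2 * (f u - log (1 + f u)) := by
    rw [← sq_sqrt hg, ← mul_pow, hu]
  rcases eq_or_ne (f u) 0 with h | h
  · simp [hu₂, h]
  · rcases Real.sign_apply_eq_of_ne_zero _ h with hs | hs <;> simp [hu₂, hs]

lemma monotone_of_sign_mul_sqrt_eq : Monotone f := by
  intro u₁ u₂ hu
  by_contra! h
  have hg₁ := sub_log_one_add_eq_sq_of_sign_mul_sqrt_eq hf u₁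
  have hg₂ := sub_log_one_add_eq_sq_of_sign_mul_sqrt_eq hf u₂
  rcases le_or_gt 0 (f u₂) with h₂ | h₂
  · have hu₁ := (pos_iff_of_sign_mul_sqrt_eq hf u₁).1 (h₂.trans_lt h)
    have hu₂ := not_lt.1 ((neg_iff_of_sign_mul_sqrt_eq hf u₂).not.1 (not_lt.2 h₂))
    have := strictMonoOn_sub_log_one_add (mem_Ici.2 h₂) (mem_Ici.2 (h₂.trans h.le)) h
    simp only [hg₁, hg₂] at this
    nlinarith
  rcases le_or_gt (f u₁) 0 with h₁ | h₁
  · have hu₂ := (neg_iff_of_sign_mul_sqrt_eq hf u₂).1 h₂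
    have := strictAntiOn_sub_log_one_add ⟨(hf u₂).1, h₂.le⟩ ⟨(hf u₁).1, h₁⟩ h
    simp only [hg₁, hg₂] at this
    nlinarith
  · linarith [(pos_iff_of_sign_mul_sqrt_eq hf u₁).1 h₁, (neg_iff_of_sign_mul_sqrt_eq hf u₂).1 h₂]

variable {y : ℝ → ℝ} (hy : ∀ v : ℝ, y v = if v = 0 then √2 / 2 else v / f v)
include hy

lemma abs_add_apply_neg_sub_sqrt_two_le {v : ℝ} (hv : 0 ≤ v) : |y v + y (-v) - √2| ≤ v := by
  rcases hv.eq_or_lt with rfl | hv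
  · simp [hy]
  have hfv := (pos_iff_of_sign_mul_sqrt_eq hf v).2 hv
  have hfv' := (neg_iff_of_sign_mul_sqrt_eq hf (-v)).2 (neg_lt_zero.2 hv)
  obtain ⟨hp₁, hp₂⟩ := div_bounds_of_sub_log_one_add_eq_sq_of_pos hfv
    (sub_log_one_add_eq_sq_of_sign_mul_sqrt_eq hf v)
  obtain ⟨hq₁, hq₂⟩ := div_bounds_of_sub_log_one_add_eq_sq_of_neg (hf (-v)).1 hfv'
    (sub_log_one_add_eq_sq_of_sign_mul_sqrt_eq hf (-v))
  rw [hy, hy, if_neg hv.ne', if_neg (neg_ne_zero.2 hv.ne')]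
  refine abs_add_sub_sqrt_two_le (div_pos hv hfv) (div_pos_of_neg_of_neg (neg_lt_zero.2 hv) hfv')
    hp₁ hp₂ hq₁ ?_
  linarith

lemma measurable_of_eq_ite_div : Measurable y := by
  rw [funext hy]
  exact Measurable.ite (measurableSet_singleton 0) measurable_const
    (measurable_id.div (monotone_of_sign_mul_sqrt_eq hf).measurable)

end SignedRootInverse

lemma setIntegral_Ioi_two_mul_sqrt_two_mul_exp_neg_sq :
    ∫ u in Ioi (0 : ℝ), 2 * √2 * exp (-u ^ 2) = √(2 * π) := by
  have h := integral_gaussian_Ioi 1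
  simp only [neg_mul, one_mul, div_one] at h
  rw [integral_const_mul, h, sqrt_mul zero_le_two]
  ring

lemma integrable_mul_exp_neg_sq (c : ℝ) :
    Integrable (fun u : ℝ => 2 * (c + u) * exp (-u ^ 2)) := by
  have h₁ := integrable_exp_neg_mul_sq one_pos
  have h₂ := integrable_mul_exp_neg_mul_sq one_pos
  simp only [neg_mul, one_mul] at h₁ h₂
  refine ((h₁.const_mul (2 * c)).add (h₂.const_mul 2)).congr (ae_of_all _ fun u => ?_)
  simp only [Pi.add_apply]
  ring

theorem stmt_8 (f : ℝ → ℝ)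
    (hf : ∀ u : ℝ, f u ∈ Set.Ioi (-1 : ℝ) ∧
      Real.sign (f u) * Real.sqrt (f u - Real.log (1 + f u)) = u)
    (y : ℝ → ℝ)
    (hy : ∀ v : ℝ, y v = if v = 0 then Real.sqrt 2 / 2 else v / f v) :
    Filter.Tendsto
      (fun s : ℝ => ∫ u in Set.Ioi (0 : ℝ),
        2 * (y (u / Real.sqrt s) + y (-(u / Real.sqrt s))) * Real.exp (-u ^ 2))
      Filter.atTop (nhds (Real.sqrt (2 * Real.pi))) := by
  have hbound := fun v (hv : 0 ≤ v) => abs_add_apply_neg_sub_sqrt_two_le hf hy hv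
  have hym := measurable_of_eq_ite_div hf hy
  rw [← setIntegral_Ioi_two_mul_sqrt_two_mul_exp_neg_sq]
  refine tendsto_integral_filter_of_dominated_convergence (fun u => 2 * (√2 + u) * exp (-u ^ 2))
    (Eventually.of_forall fun s => ?_) ?_ (integrable_mul_exp_neg_sq _).restrict ?_
  · have hm : Measurable fun u : ℝ => u / √s := measurable_id.div_const _
    exact ((measurable_const.mul ((hym.comp hm).add (hym.comp hm.neg))).mul
      (by fun_prop)).aestronglyMeasurable
  · filter_upwards [eventually_ge_atTop 1] with s hs
    refine (ae_restrict_iff' measurableSet_Ioi).2 (ae_of_all _ fun u (hu : 0 < u) => ?_)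
    have hv : u / √s ≤ u := div_le_self hu.le (one_le_sqrt.2 hs)
    have := abs_le.1 (hbound (u / √s) (by positivity))
    rw [norm_mul, norm_mul, Real.norm_two, Real.norm_of_nonneg (exp_pos _).le, Real.norm_eq_abs]
    gcongr
    exact abs_le.2 ⟨by linarith [sqrt_nonneg 2], by linarith⟩
  · refine (ae_restrict_iff' measurableSet_Ioi).2 (ae_of_all _ fun u (hu : 0 < u) => ?_)
    have hv : Tendsto (fun s => u / √s) atTop (𝓝 0) :=
      tendsto_const_nhds.div_atTop tendsto_sqrt_atTop
    have hsum : Tendsto (fun s => y (u / √s) + y (-(u / √s))) atTop (𝓝 (√2)) := by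
      rw [← tendsto_sub_nhds_zero_iff]
      exact squeeze_zero_norm (fun s => hbound _ (by positivity)) hv
    exact (hsum.const_mul 2).mul_const _
end

section
/- Stirling's formula: Γ(s+1) = (s/e)^s · √(2πs) · (1 + o(1)) as s → +∞, i.e., lim_{s→∞} Γ(s+1) / ((s/e)^s √(2πs)) = 1. -/
/-!
Stirling's formula for `n!` (`Stirling.factorial_isEquivalent_stirling`) leaves only the passage
from `n = ⌊s⌋` to real `s`. Writing `s = n + x` with `0 ≤ x < 1`, log-convexity of `Γ`
(Bohr–Mollerup) pins `log Γ(s + 1) - log n!` between `x log n` and `x log (n + 1)`, while the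
logarithm of the approximation `(s/e)^s √(2πs)` grows by `x log n + O(1/n)`. Hence the logarithms
of the Stirling ratios at `s` and at `⌊s⌋` differ by `O(1/⌊s⌋)`.
-/

open Real Filter Topology
open scoped Nat

noncomputable def stirlingRatio (s : ℝ) : ℝ :=
  Gamma (s + 1) / ((s / exp 1) ^ s * √(2 * π * s))

noncomputable def logStirlingApprox (s : ℝ) : ℝ :=
  s * log s - s + log (2 * π * s) / 2

lemma stirlingRatio_pos {s : ℝ} (hs : 0 < s) : 0 < stirlingRatio s := by
  have := Gamma_pos_of_pos (by linarith : 0 < s + 1)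
  unfold stirlingRatio
  positivity

lemma log_stirlingRatio {s : ℝ} (hs : 0 < s) :
    log (stirlingRatio s) = log (Gamma (s + 1)) - logStirlingApprox s := by
  rw [stirlingRatio, logStirlingApprox,
    log_div (Gamma_pos_of_pos (by linarith)).ne' (by positivity),
    log_mul (by positivity) (by positivity), log_rpow (by positivity),
    log_div hs.ne' (exp_pos 1).ne', log_exp, log_sqrt (by positivity)]
  ring

lemma tendsto_stirlingRatio_nat : Tendsto (fun n : ℕ => stirlingRatio n) atTop (𝓝 1) := by
  have h := (Asymptotics.isEquivalent_iff_tendsto_one <| (eventually_ne_atTop 0).mono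
    fun n hn => by positivity).1 Stirling.factorial_isEquivalent_stirling
  refine h.congr fun n => ?_
  rw [Pi.div_apply, stirlingRatio, Gamma_nat_eq_factorial, rpow_natCast, mul_comm,
    mul_right_comm 2 π]

lemma log_Gamma_add_one {y : ℝ} (hy : 0 < y) : log (Gamma (y + 1)) = log (Gamma y) + log y := by
  rw [Gamma_add_one hy.ne', log_mul hy.ne' (Gamma_pos_of_pos hy).ne', add_comm]

lemma log_factorial_add_mul_log_le_log_Gamma {k : ℕ} (hk : k ≠ 0) {x : ℝ} (hx : 0 ≤ x) :
    log k ! + x * log k ≤ log (Gamma (k + x + 1)) := by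
  rcases hx.eq_or_lt with rfl | hx
  · simp [Gamma_nat_eq_factorial]
  have := BohrMollerup.f_add_nat_ge convexOn_log_Gamma log_Gamma_add_one (n := k + 1) (by omega) hx
  push_cast at this
  simpa [add_right_comm, Gamma_nat_eq_factorial] using this

lemma log_Gamma_le_log_factorial_add_mul_log (k : ℕ) {x : ℝ} (hx : 0 ≤ x) (hx' : x ≤ 1) :
    log (Gamma (k + x + 1)) ≤ log k ! + x * log (k + 1) := by
  rcases hx.eq_or_lt with rfl | hx
  · simp [Gamma_nat_eq_factorial]
  have :=
    BohrMollerup.f_add_nat_le convexOn_log_Gamma log_Gamma_add_one (n := k + 1) (by omega) hx hx'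
  push_cast at this
  simpa [add_right_comm, Gamma_nat_eq_factorial] using this

lemma logStirlingApprox_add_sub {k x : ℝ} (hk : 0 < k) (hx : 0 ≤ x) :
    logStirlingApprox (k + x) - logStirlingApprox k
      = x * log k + ((k + x + 1 / 2) * log (1 + x / k) - x) := by
  have hkx : 0 < k + x := by linarith
  have h : log (1 + x / k) = log (k + x) - log k := by
    rw [← log_div hkx.ne' hk.ne', add_div, div_self hk.ne']
  rw [logStirlingApprox, logStirlingApprox, h, log_mul (by positivity) hkx.ne',
    log_mul (by positivity) hk.ne']
  ring

lemma mul_log_le_logStirlingApprox_add_sub {k x : ℝ} (hk : 0 < k) (hx : 0 ≤ x) :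
    x * log k ≤ logStirlingApprox (k + x) - logStirlingApprox k := by
  rw [logStirlingApprox_add_sub hk hx, le_add_iff_nonneg_right, sub_nonneg]
  have hkx : 0 < k + x := by linarith
  have h := one_sub_inv_le_log_of_pos (by positivity : 0 < 1 + x / k)
  have h' : 1 - (1 + x / k)⁻¹ = x / (k + x) := by field_simp; ring
  rw [h'] at h
  have hlog : 0 ≤ log (1 + x / k) := (div_nonneg hx hkx.le).trans h
  calc x = (k + x) * (x / (k + x)) := by field_simp
    _ ≤ (k + x) * log (1 + x / k) := by gcongr
    _ ≤ (k + x + 1 / 2) * log (1 + x / k) := by nlinarith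

lemma logStirlingApprox_add_sub_le {k x : ℝ} (hk : 0 < k) (hx : 0 ≤ x) :
    logStirlingApprox (k + x) - logStirlingApprox k ≤ x * log k + (x ^ 2 + x / 2) / k := by
  rw [logStirlingApprox_add_sub hk hx, add_le_add_iff_left, sub_le_iff_le_add']
  have h := log_le_sub_one_of_pos (by positivity : 0 < 1 + x / k)
  calc (k + x + 1 / 2) * log (1 + x / k) ≤ (k + x + 1 / 2) * (x / k) := by
        gcongr; linarith
    _ = x + (x ^ 2 + x / 2) / k := by field_simp; ring

lemma log_add_one_sub_log_le {k : ℝ} (hk : 0 < k) : log (k + 1) - log k ≤ 1 / k := by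
  rw [← log_div (by positivity) hk.ne']
  calc log ((k + 1) / k) ≤ (k + 1) / k - 1 := log_le_sub_one_of_pos (by positivity)
    _ = 1 / k := by field_simp; ring

lemma abs_log_stirlingRatio_sub_log_stirlingRatio_floor_le {s : ℝ} (hs : 1 ≤ s) :
    |log (stirlingRatio s) - log (stirlingRatio ⌊s⌋₊)| ≤ 2 / ⌊s⌋₊ := by
  set k := ⌊s⌋₊
  set x := s - k
  have hk : k ≠ 0 := (Nat.floor_pos.2 hs).ne'
  have hk0 : (0 : ℝ) < k := by positivity
  have hx0 : 0 ≤ x := sub_nonneg.2 (Nat.floor_le (by linarith))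
  have hx1 : x ≤ 1 := by linarith [Nat.lt_floor_add_one s]
  have hs' : s = k + x := by ring
  have hΓ_lo := log_factorial_add_mul_log_le_log_Gamma hk hx0
  have hΓ_hi := log_Gamma_le_log_factorial_add_mul_log k hx0 hx1
  have hL_lo := mul_log_le_logStirlingApprox_add_sub hk0 hx0
  have hL_hi := logStirlingApprox_add_sub_le hk0 hx0
  have hlog : x * log (k + 1) - x * log k ≤ 1 / k := by
    rw [← mul_sub]
    calc x * (log (k + 1) - log k) ≤ x * (1 / k) :=
          mul_le_mul_of_nonneg_left (log_add_one_sub_log_le hk0) hx0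
      _ ≤ 1 / k := mul_le_of_le_one_left (by positivity) hx1
  have hsq : (x ^ 2 + x / 2) / k ≤ 2 / k := by gcongr; nlinarith
  have h12 : 1 / (k : ℝ) ≤ 2 / k := by gcongr; norm_num
  rw [log_stirlingRatio (by linarith), log_stirlingRatio hk0, hs', Gamma_nat_eq_factorial, abs_le]
  constructor <;> linarith

theorem stmt_9 :
    Filter.Tendsto
      (fun s : ℝ => Real.Gamma (s + 1) /
        ((s / Real.exp 1) ^ s * Real.sqrt (2 * Real.pi * s)))
      Filter.atTop (nhds 1) := by
  show Tendsto stirlingRatio atTop (𝓝 1)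
  have h_nat : Tendsto (fun n : ℕ => log (stirlingRatio n)) atTop (𝓝 0) := by
    simpa using tendsto_stirlingRatio_nat.log one_ne_zero
  have h_gap : Tendsto (fun s => log (stirlingRatio s) - log (stirlingRatio ⌊s⌋₊)) atTop (𝓝 0) := by
    refine squeeze_zero_norm' ?_
      ((tendsto_const_div_atTop_nhds_zero_nat 2).comp tendsto_nat_floor_atTop)
    filter_upwards [eventually_ge_atTop 1] with s hs
    exact abs_log_stirlingRatio_sub_log_stirlingRatio_floor_le hs
  have h_log : Tendsto (fun s => log (stirlingRatio s)) atTop (𝓝 0) := by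
    simpa using h_gap.add (h_nat.comp tendsto_nat_floor_atTop)
  have h_exp := h_log.rexp
  rw [exp_zero] at h_exp
  refine h_exp.congr' ?_
  filter_upwards [eventually_gt_atTop 0] with s hs
  exact exp_log (stirlingRatio_pos hs)
end

section
/- The function y defined by y(v) = v/f(v) for v ≠ 0 and y(0) = √2/2, where f is the inverse of x ↦ sgn(x)·√(x - ln(1+x)), is infinitely differentiable on ℝ. -/
open Real Set Filter Topology

noncomputable section StmtAux

private noncomputable def hh (t : ℝ) : ℝ := t - Real.log (1 + t)

private lemma hh_zero : hh 0 = 0 := by simp [hh]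

private lemma hh_pos {t : ℝ} (ht : -1 < t) (ht0 : t ≠ 0) : 0 < hh t := by
  have h1 : (0:ℝ) < 1 + t := by linarith
  have h2 : (1:ℝ) + t ≠ 1 := by intro h; exact ht0 (by linarith)
  have := Real.log_lt_sub_one_of_pos h1 h2
  simp only [hh]; linarith

private lemma hh_nonneg {t : ℝ} (ht : -1 < t) : 0 ≤ hh t := by
  rcases eq_or_ne t 0 with rfl | h
  · simp [hh]
  · exact (hh_pos ht h).le

private lemma hh_hasDerivAt {t : ℝ} (ht : -1 < t) : HasDerivAt hh (t / (1 + t)) t := by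
  have h1 : (0:ℝ) < 1 + t := by linarith
  have hlog : HasDerivAt (fun s : ℝ => Real.log (1 + s)) (1 / (1 + t)) t := by
    have h2 : HasDerivAt (fun s : ℝ => 1 + s) 1 t := by
      simpa using (hasDerivAt_id t).const_add (1:ℝ)
    have := (Real.hasDerivAt_log h1.ne').comp t h2
    simpa [one_div, Function.comp_def] using this
  have h3 := (hasDerivAt_id t).sub hlog
  have h4 : (1 : ℝ) - 1 / (1 + t) = t / (1 + t) := by field_simp; ring
  rw [h4] at h3
  exact h3

private lemma hh_analyticAt {t : ℝ} (ht : -1 < t) : AnalyticAt ℝ hh t := by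
  have h1 : (0:ℝ) < 1 + t := by linarith
  have hA : AnalyticAt ℝ (fun s : ℝ => (Complex.log (1 + (s:ℂ))).re) t := by
    have hin : AnalyticAt ℝ (fun s : ℝ => 1 + (s:ℂ)) t :=
      analyticAt_const.add (Complex.ofRealCLM.analyticAt t)
    have h2 : AnalyticAt ℂ Complex.log (1 + (t:ℂ)) := by
      apply _root_.analyticAt_clog
      rw [Complex.mem_slitPlane_iff]
      left; simpa using h1
    have h3 : AnalyticAt ℝ Complex.log (1 + (t:ℂ)) := h2.restrictScalars
    have h4 : AnalyticAt ℝ (fun s : ℝ => Complex.log (1 + (s:ℂ))) t :=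
      AnalyticAt.comp (f := fun s : ℝ => 1 + (s:ℂ)) (x := t) h3 hin
    exact AnalyticAt.comp (f := fun s : ℝ => Complex.log (1 + (s:ℂ))) (x := t)
      (Complex.reCLM.analyticAt _) h4
  have heq : (fun s : ℝ => (Complex.log (1 + (s:ℂ))).re) =ᶠ[𝓝 t] fun s => Real.log (1 + s) := by
    filter_upwards [isOpen_Ioi.eventually_mem (show t ∈ Ioi (-1:ℝ) from ht)] with s hs
    have hs1 : ((1 + s : ℝ) : ℂ) = 1 + (s:ℂ) := by push_cast; ring
    rw [← hs1, Complex.log_ofReal_re]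
  exact analyticAt_id.sub (hA.congr heq)

private noncomputable def gg (t : ℝ) : ℝ := Real.sign t * Real.sqrt (hh t)

private lemma gg_zero : gg 0 = 0 := by simp [gg, Real.sign_zero]

private lemma hh_strictAntiOn : StrictAntiOn hh (Ioc (-1:ℝ) 0) := by
  apply strictAntiOn_of_deriv_neg (convex_Ioc _ _)
  · intro x hx
    exact (hh_hasDerivAt hx.1).differentiableAt.continuousAt.continuousWithinAt
  · intro x hx
    rw [interior_Ioc] at hx
    rw [(hh_hasDerivAt hx.1).deriv]
    have h1 : (0:ℝ) < 1 + x := by linarith [hx.1]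
    exact div_neg_of_neg_of_pos hx.2 h1

private lemma hh_strictMonoOn : StrictMonoOn hh (Ici (0:ℝ)) := by
  apply strictMonoOn_of_deriv_pos (convex_Ici _)
  · intro x hx
    have : (-1:ℝ) < x := lt_of_lt_of_le (by norm_num) hx
    exact (hh_hasDerivAt this).differentiableAt.continuousAt.continuousWithinAt
  · intro x hx
    rw [interior_Ici] at hx
    have hx1 : (-1:ℝ) < x := by linarith [mem_Ioi.mp hx]
    rw [(hh_hasDerivAt hx1).deriv]
    have h0 : (0:ℝ) < x := mem_Ioi.mp hx
    have h1 : (0:ℝ) < 1 + x := by linarith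
    positivity

private lemma gg_strictMonoOn : StrictMonoOn gg (Ioi (-1:ℝ)) := by
  intro a ha b hb hab
  simp only [mem_Ioi] at ha hb
  rcases lt_trichotomy b 0 with hb0 | hb0 | hb0
  · have ha0 : a < 0 := hab.trans hb0
    have h1 : hh b < hh a := hh_strictAntiOn ⟨ha, ha0.le⟩ ⟨hb, hb0.le⟩ hab
    rw [gg, gg, Real.sign_of_neg ha0, Real.sign_of_neg hb0]
    have h2 := Real.sqrt_lt_sqrt (hh_nonneg hb) h1
    nlinarith
  · subst hb0
    have ha0 : a < 0 := hab
    rw [gg, gg, Real.sign_zero, Real.sign_of_neg ha0]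
    have h2 : 0 < Real.sqrt (hh a) := Real.sqrt_pos.mpr (hh_pos ha ha0.ne)
    nlinarith
  · rcases lt_trichotomy a 0 with ha0 | ha0 | ha0
    · rw [gg, gg, Real.sign_of_neg ha0, Real.sign_of_pos hb0]
      have h2 : 0 < Real.sqrt (hh a) := Real.sqrt_pos.mpr (hh_pos ha ha0.ne)
      have h3 : 0 ≤ Real.sqrt (hh b) := Real.sqrt_nonneg _
      nlinarith
    · subst ha0
      rw [gg, gg, Real.sign_zero, Real.sign_of_pos hb0]
      have h2 : 0 < Real.sqrt (hh b) := Real.sqrt_pos.mpr (hh_pos hb hb0.ne')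
      nlinarith
    · have h1 : hh a < hh b := hh_strictMonoOn (le_of_lt ha0) (le_of_lt (ha0.trans hab)) hab
      rw [gg, gg, Real.sign_of_pos ha0, Real.sign_of_pos hb0]
      have h2 := Real.sqrt_lt_sqrt (hh_nonneg ha) h1
      nlinarith

private lemma hh_tendsto_half :
    Tendsto (fun t : ℝ => hh t / t ^ 2) (𝓝[≠] (0:ℝ)) (𝓝 (1/2)) := by
  have hcont : ContinuousAt hh 0 := (hh_analyticAt (by norm_num)).continuousAt
  apply HasDerivAt.lhopital_zero_nhdsNE (f' := fun t => t / (1 + t)) (g' := fun t => 2 * t)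
  · filter_upwards [eventually_nhdsWithin_of_eventually_nhds
      (isOpen_Ioi.eventually_mem (show (0:ℝ) ∈ Ioi (-1:ℝ) by norm_num))] with t ht
    exact hh_hasDerivAt ht
  · filter_upwards with t
    simpa using (hasDerivAt_pow 2 t)
  · filter_upwards [self_mem_nhdsWithin] with t ht
    simp only [mem_compl_iff, mem_singleton_iff] at ht
    intro h; exact ht (by linarith [h])
  · have := hcont.tendsto
    rw [hh_zero] at this
    exact this.mono_left nhdsWithin_le_nhds
  · have : Tendsto (fun t : ℝ => t ^ 2) (𝓝 0) (𝓝 0) := by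
      simpa using (continuous_pow 2).tendsto (0:ℝ)
    exact this.mono_left nhdsWithin_le_nhds
  · have key : Tendsto (fun t : ℝ => 1 / (2 * (1 + t))) (𝓝 (0:ℝ)) (𝓝 (1/2)) := by
      have : ContinuousAt (fun t : ℝ => 1 / (2 * (1 + t))) 0 := by
        apply ContinuousAt.div continuousAt_const
        · fun_prop
        · norm_num
      simpa using this.tendsto
    apply Tendsto.congr' _ (key.mono_left nhdsWithin_le_nhds)
    filter_upwards [self_mem_nhdsWithin,
      eventually_nhdsWithin_of_eventually_nhds
        (isOpen_Ioi.eventually_mem (show (0:ℝ) ∈ Ioi (-1:ℝ) by norm_num))] with t ht ht1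
    simp only [mem_compl_iff, mem_singleton_iff] at ht
    have h1 : (1:ℝ) + t ≠ 0 := by intro h; simp [mem_Ioi] at ht1; linarith
    field_simp

private lemma exists_q : ∃ q : ℝ → ℝ, AnalyticAt ℝ q 0 ∧ q 0 = 1/2 ∧
    ∀ᶠ t in 𝓝 (0:ℝ), hh t = t ^ 2 * q t := by
  have hA : AnalyticAt ℝ hh 0 := hh_analyticAt (by norm_num)
  have hne : ¬ ∀ᶠ t in 𝓝 (0:ℝ), hh t = 0 := by
    intro hev
    have h2 := hev.filter_mono (nhdsWithin_le_nhds (s := Ioi (0:ℝ)))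
    obtain ⟨t, hteq, ht⟩ := (h2.and self_mem_nhdsWithin).exists
    have : 0 < hh t := hh_pos (by linarith [ht]) (ne_of_gt ht)
    rw [hteq] at this; exact lt_irrefl 0 this
  obtain ⟨n, q, hq, hq0, heq⟩ := hA.exists_eventuallyEq_pow_smul_nonzero_iff.mpr hne
  simp only [sub_zero, smul_eq_mul] at heq
  have hqc : ContinuousAt q 0 := hq.continuousAt
  have hlim_n : Tendsto (fun t : ℝ => hh t / t ^ n) (𝓝[≠] (0:ℝ)) (𝓝 (q 0)) := by
    apply Tendsto.congr' _ (hqc.tendsto.mono_left nhdsWithin_le_nhds)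
    filter_upwards [eventually_nhdsWithin_of_eventually_nhds heq, self_mem_nhdsWithin]
      with t h1 h2
    simp only [mem_compl_iff, mem_singleton_iff] at h2
    rw [h1, mul_comm, mul_div_assoc, div_self (pow_ne_zero n h2), mul_one]
  have hlim2 := hh_tendsto_half
  have hn2 : n = 2 := by
    by_contra hn
    rcases lt_or_gt_of_ne hn with hlt | hgt
    · have hkey : Tendsto (fun t : ℝ => hh t / t ^ n) (𝓝[≠] (0:ℝ)) (𝓝 0) := by
        have h2n : 1 ≤ 2 - n := by omega
        have ht0 : Tendsto (fun t : ℝ => t ^ (2 - n)) (𝓝[≠] (0:ℝ)) (𝓝 0) := by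
          have := ((continuous_pow (2-n)).tendsto (0:ℝ)).mono_left
            (nhdsWithin_le_nhds (s := {(0:ℝ)}ᶜ))
          simpa [zero_pow (by omega : 2 - n ≠ 0)] using this
        have := hlim2.mul ht0
        rw [mul_zero] at this
        apply Tendsto.congr' _ this
        filter_upwards [self_mem_nhdsWithin] with t ht
        simp only [mem_compl_iff, mem_singleton_iff] at ht
        have hpow : t ^ 2 = t ^ n * t ^ (2 - n) := by
          rw [← pow_add]; congr 1; omega
        rw [hpow, ← div_div, div_mul_cancel₀ _ (pow_ne_zero _ ht)]
      exact hq0 (tendsto_nhds_unique hlim_n hkey)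
    · have hkey : Tendsto (fun t : ℝ => hh t / t ^ 2) (𝓝[≠] (0:ℝ)) (𝓝 0) := by
        have ht0 : Tendsto (fun t : ℝ => t ^ (n - 2)) (𝓝[≠] (0:ℝ)) (𝓝 0) := by
          have := ((continuous_pow (n-2)).tendsto (0:ℝ)).mono_left
            (nhdsWithin_le_nhds (s := {(0:ℝ)}ᶜ))
          simpa [zero_pow (by omega : n - 2 ≠ 0)] using this
        have := hlim_n.mul ht0
        rw [mul_zero] at this
        apply Tendsto.congr' _ this
        filter_upwards [self_mem_nhdsWithin] with t ht
        simp only [mem_compl_iff, mem_singleton_iff] at ht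
        have hpow : t ^ n = t ^ 2 * t ^ (n - 2) := by
          rw [← pow_add]; congr 1; omega
        rw [hpow, ← div_div, div_mul_cancel₀ _ (pow_ne_zero _ ht)]
      have := tendsto_nhds_unique hlim2 hkey
      norm_num at this
  subst hn2
  exact ⟨q, hq, (tendsto_nhds_unique hlim_n hlim2).symm ▸ rfl, heq⟩

private lemma rsign_mul_abs (t : ℝ) : Real.sign t * |t| = t := by
  rcases lt_trichotomy t 0 with h | h | h
  · rw [Real.sign_of_neg h, abs_of_neg h]; ring
  · simp [h]
  · rw [Real.sign_of_pos h, abs_of_pos h]; ring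

private lemma gg_contDiffAt_ne {t₀ : ℝ} (ht : -1 < t₀) (ht0 : t₀ ≠ 0) :
    ∃ c : ℝ, c ≠ 0 ∧ ContDiffAt ℝ (⊤ : ℕ∞) gg t₀ ∧ HasDerivAt gg c t₀ := by
  have hpos := hh_pos ht ht0
  have h1t : (0:ℝ) < 1 + t₀ := by linarith
  have hF : ContDiffAt ℝ (⊤ : ℕ∞) (fun t => Real.sqrt (hh t)) t₀ :=
    (Real.contDiffAt_sqrt hpos.ne').comp t₀ (hh_analyticAt ht).contDiffAt
  have hFd : HasDerivAt (fun t => Real.sqrt (hh t))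
      (1 / (2 * Real.sqrt (hh t₀)) * (t₀ / (1 + t₀))) t₀ :=
    (Real.hasDerivAt_sqrt hpos.ne').comp t₀ (hh_hasDerivAt ht)
  have hsq : 0 < Real.sqrt (hh t₀) := Real.sqrt_pos.mpr hpos
  rcases lt_or_gt_of_ne ht0 with hneg | hposi
  · have heq : gg =ᶠ[𝓝 t₀] (fun t => -Real.sqrt (hh t)) := by
      filter_upwards [isOpen_Iio.eventually_mem (show t₀ ∈ Iio (0:ℝ) from hneg)] with t htn
      rw [gg, Real.sign_of_neg htn]; ring
    refine ⟨-(1 / (2 * Real.sqrt (hh t₀)) * (t₀ / (1 + t₀))), ?_, ?_, ?_⟩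
    · have : t₀ / (1 + t₀) < 0 := div_neg_of_neg_of_pos hneg h1t
      intro h
      have h2 : 1 / (2 * Real.sqrt (hh t₀)) > 0 := by positivity
      nlinarith
    · exact hF.neg.congr_of_eventuallyEq heq
    · exact hFd.neg.congr_of_eventuallyEq heq
  · have heq : gg =ᶠ[𝓝 t₀] (fun t => Real.sqrt (hh t)) := by
      filter_upwards [isOpen_Ioi.eventually_mem (show t₀ ∈ Ioi (0:ℝ) from hposi)] with t htn
      rw [gg, Real.sign_of_pos htn]; ring
    refine ⟨1 / (2 * Real.sqrt (hh t₀)) * (t₀ / (1 + t₀)), ?_, ?_, ?_⟩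
    · have : 0 < t₀ / (1 + t₀) := div_pos hposi h1t
      positivity
    · exact hF.congr_of_eventuallyEq heq
    · exact hFd.congr_of_eventuallyEq heq

private lemma gg_contDiffAt_zero :
    ∃ c : ℝ, c ≠ 0 ∧ ContDiffAt ℝ (⊤ : ℕ∞) gg 0 ∧ HasDerivAt gg c 0 := by
  obtain ⟨q, hq, hq0, hfac⟩ := exists_q
  have hq0' : q 0 ≠ 0 := by rw [hq0]; norm_num
  have hsq : ContDiffAt ℝ (⊤ : ℕ∞) (fun t => Real.sqrt (q t)) 0 :=
    (Real.contDiffAt_sqrt hq0').comp 0 hq.contDiffAt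
  have hG : ContDiffAt ℝ (⊤ : ℕ∞) (fun t => t * Real.sqrt (q t)) 0 := contDiffAt_id.mul hsq
  have hsqd := (hsq.differentiableAt (by simp)).hasDerivAt
  have hGd : HasDerivAt (fun t => t * Real.sqrt (q t)) (Real.sqrt (q 0)) 0 := by
    have := (hasDerivAt_id (0:ℝ)).mul hsqd
    simpa [Pi.mul_def] using this
  have hqpos : ∀ᶠ t in 𝓝 (0:ℝ), 0 < q t :=
    hq.continuousAt.tendsto.eventually
      (isOpen_Ioi.eventually_mem (show q 0 ∈ Ioi (0:ℝ) by rw [hq0]; norm_num))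
  have heq : gg =ᶠ[𝓝 (0:ℝ)] (fun t => t * Real.sqrt (q t)) := by
    filter_upwards [hfac, hqpos] with t h1 h2
    rw [gg, h1, Real.sqrt_mul (sq_nonneg t), Real.sqrt_sq_eq_abs, ← mul_assoc,
      rsign_mul_abs]
  refine ⟨Real.sqrt (q 0), ?_, hG.congr_of_eventuallyEq heq, hGd.congr_of_eventuallyEq heq⟩
  rw [hq0]
  positivity

private lemma f_contDiffAt (f : ℝ → ℝ) (hmem : ∀ u, f u ∈ Ioi (-1:ℝ))
    (hinv : ∀ u, gg (f u) = u)
    (u₀ : ℝ) {c : ℝ} (hc : c ≠ 0) (hgg : ContDiffAt ℝ (⊤ : ℕ∞) gg (f u₀))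
    (hgd : HasDerivAt gg c (f u₀)) : ContDiffAt ℝ (⊤ : ℕ∞) f u₀ := by
  set e : ℝ ≃L[ℝ] ℝ := ContinuousLinearEquiv.unitsEquivAut ℝ (Units.mk0 c hc) with he_def
  have he : HasFDerivAt gg (e : ℝ →L[ℝ] ℝ) (f u₀) := by
    have h1 := hgd.hasFDerivAt
    have hE : (e : ℝ →L[ℝ] ℝ) = ContinuousLinearMap.toSpanSingleton ℝ c := by
      ext; simp [he_def]
    rw [hE]; exact h1
  have hloc := hgg.to_localInverse (f' := e) he (by simp)
  rw [hinv u₀] at hloc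
  apply hloc.congr_of_eventuallyEq
  have hs := hgg.hasStrictFDerivAt' he (by simp)
  have h1 : ∀ᶠ y in 𝓝 u₀, gg ((hs.localInverse gg e (f u₀)) y) = y := by
    have := hs.eventually_right_inverse
    rwa [hinv u₀] at this
  have h2 : ∀ᶠ y in 𝓝 u₀, (hs.localInverse gg e (f u₀)) y ∈ Ioi (-1:ℝ) := by
    have := hs.localInverse_tendsto.eventually (isOpen_Ioi.eventually_mem (hmem u₀))
    rwa [hinv u₀] at this
  filter_upwards [h1, h2] with y hy1 hy2
  have h3 : gg (f y) = gg ((hs.localInverse gg e (f u₀)) y) := by rw [hinv y, hy1]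
  exact gg_strictMonoOn.injOn (hmem y) hy2 h3

end StmtAux

theorem stmt_12 (f : ℝ → ℝ)
    (hf : ∀ u : ℝ, f u ∈ Set.Ioi (-1 : ℝ) ∧
      Real.sign (f u) * Real.sqrt (f u - Real.log (1 + f u)) = u) :
    ContDiff ℝ (⊤ : ℕ∞) (fun v : ℝ => if v = 0 then Real.sqrt 2 / 2 else v / f v) := by
  have hmem : ∀ u, f u ∈ Ioi (-1:ℝ) := fun u => (hf u).1
  have hinv : ∀ u, gg (f u) = u := fun u => (hf u).2
  have hf0 : f 0 = 0 := by
    by_contra h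
    have h1 : gg (f 0) = 0 := hinv 0
    have h2 : 0 < Real.sqrt (hh (f 0)) := Real.sqrt_pos.mpr (hh_pos (hmem 0) h)
    rcases lt_trichotomy (f 0) 0 with hl | hl | hl
    · rw [gg, Real.sign_of_neg hl] at h1; nlinarith
    · exact h hl
    · rw [gg, Real.sign_of_pos hl] at h1; nlinarith
  have hfne : ∀ v : ℝ, v ≠ 0 → f v ≠ 0 := by
    intro v hv hfv
    apply hv
    rw [← hinv v, hfv, gg_zero]
  have hfsmooth : ∀ u : ℝ, ContDiffAt ℝ (⊤ : ℕ∞) f u := by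
    intro u
    rcases eq_or_ne u 0 with rfl | hu
    · obtain ⟨c, hc, h1, h2⟩ := gg_contDiffAt_zero
      rw [← hf0] at h1 h2
      exact f_contDiffAt f hmem hinv 0 hc h1 h2
    · obtain ⟨c, hc, h1, h2⟩ := gg_contDiffAt_ne (hmem u) (hfne u hu)
      exact f_contDiffAt f hmem hinv u hc h1 h2
  rw [contDiff_iff_contDiffAt]
  intro v₀
  rcases eq_or_ne v₀ 0 with rfl | hv₀
  · obtain ⟨q, hq, hq0, hfac⟩ := exists_q
    have hq0' : q 0 ≠ 0 := by rw [hq0]; norm_num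
    have htarget : ContDiffAt ℝ (⊤ : ℕ∞) (fun v => Real.sqrt (q (f v))) 0 := by
      have hcomp : ContDiffAt ℝ (⊤ : ℕ∞) (fun t => Real.sqrt (q t)) (f 0) := by
        rw [hf0]; exact (Real.contDiffAt_sqrt hq0').comp 0 hq.contDiffAt
      exact hcomp.comp 0 (hfsmooth 0)
    apply htarget.congr_of_eventuallyEq
    have hc : ContinuousAt f 0 := (hfsmooth 0).continuousAt
    have hev : ∀ᶠ v in 𝓝 (0:ℝ), (hh (f v) = (f v)^2 * q (f v) ∧ 0 < q (f v)) := by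
      have hqpos : ∀ᶠ t in 𝓝 (0:ℝ), 0 < q t :=
        hq.continuousAt.tendsto.eventually
          (isOpen_Ioi.eventually_mem (show q 0 ∈ Ioi (0:ℝ) by rw [hq0]; norm_num))
      have hc' : Tendsto f (𝓝 (0:ℝ)) (𝓝 (0:ℝ)) := by simpa [hf0] using hc.tendsto
      exact hc'.eventually (hfac.and hqpos)
    filter_upwards [hev] with v hv
    rcases hv with ⟨hv1, hv2⟩
    by_cases hv0 : v = 0
    · subst hv0
      have hval : Real.sqrt (q (f 0)) = Real.sqrt 2 / 2 := by
        rw [hf0, hq0, show (1:ℝ)/2 = (Real.sqrt 2 / 2)^2 by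
          rw [div_pow, sq, Real.mul_self_sqrt (by norm_num : (0:ℝ) ≤ 2)]; norm_num,
          Real.sqrt_sq (by positivity)]
      simp [hval]
    · simp only [if_neg hv0]
      have hfv := hfne v hv0
      have hkey : v = f v * Real.sqrt (q (f v)) := by
        conv_lhs => rw [← hinv v]
        rw [gg, hv1, Real.sqrt_mul (sq_nonneg _), Real.sqrt_sq_eq_abs, ← mul_assoc,
          rsign_mul_abs]
      rw [div_eq_iff hfv, mul_comm]
      exact hkey
  · have hev : ∀ᶠ v in 𝓝 v₀, v ≠ 0 :=
      isOpen_compl_singleton.eventually_mem (by simpa using hv₀)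
    have hdiv : ContDiffAt ℝ (⊤ : ℕ∞) (fun v => v / f v) v₀ :=
      contDiffAt_id.div (hfsmooth v₀) (hfne v₀ hv₀)
    apply hdiv.congr_of_eventuallyEq
    filter_upwards [hev] with v hv
    simp only [if_neg hv]
end

section
/- If a_k denotes the k-th Maclaurin coefficient of y (where y(v) = v/f(v), y(0) = √2/2, f the inverse of x ↦ sgn(x)·√(x - ln(1+x))), then a_0 = √2/2, a_1 = -1/3, a_2 = √2/12, a_3 = -4/135, and a_4 = √2/432. -/
/-!
For `x > -1`, `sgn x · √(x - log (1 + x)) = x · √(q x)`, where `q x = (x - log (1 + x)) / x²`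
(`logDefectRatio`) is analytic at `0` with `q 0 = 1 / 2`. This map is strictly increasing on
`(-1, ∞)`, so `f` agrees near `0` with its smooth local inverse, and `y = √q ∘ f` is smooth at `0`.
Differentiating `f v - log (1 + f v) = v²` and `f v · y v = v` gives `y - v y' = 2 y³ + 2 v y²`,
and comparing Maclaurin coefficients (Leibniz rule) determines `a₁, …, a₄` one after another
from `a₀ = √2 / 2`.
-/

open Real Set Filter Topology
open scoped ContDiff Nat

theorem ContDiffAt.to_local_left_inverse {𝕂 : Type*} [RCLike 𝕂] {n : WithTop ℕ∞}
    {f g : 𝕂 → 𝕂} {a g' : 𝕂} (hg : ContDiffAt 𝕂 n g a) (hg' : HasDerivAt g g' a) (hg'0 : g' ≠ 0)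
    (hn : n ≠ 0) (hfg : ∀ᶠ x in 𝓝 a, f (g x) = x) : ContDiffAt 𝕂 n f (g a) := by
  let e : 𝕂 ≃L[𝕂] 𝕂 := .unitsEquivAut 𝕂 (.mk0 g' hg'0)
  have he : HasFDerivAt g (e : 𝕂 →L[𝕂] 𝕂) a := hg'.hasFDerivAt
  exact (hg.to_localInverse he hn).congr_of_eventuallyEq
    ((hg.hasStrictFDerivAt' he hn).localInverse_unique hfg)

section Maclaurin

variable {𝕜 : Type*} [NontriviallyNormedField 𝕜] {f g : 𝕜 → 𝕜} {k : ℕ}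

noncomputable def maclaurinCoeff (f : 𝕜 → 𝕜) (k : ℕ) : 𝕜 := iteratedDeriv k f 0 / k !

lemma maclaurinCoeff_zero (f : 𝕜 → 𝕜) : maclaurinCoeff f 0 = f 0 := by
  simp [maclaurinCoeff]

lemma Filter.EventuallyEq.maclaurinCoeff_eq (h : f =ᶠ[𝓝 0] g) (k : ℕ) :
    maclaurinCoeff f k = maclaurinCoeff g k := by
  rw [maclaurinCoeff, maclaurinCoeff, h.iteratedDeriv_eq]

lemma maclaurinCoeff_deriv [CharZero 𝕜] (f : 𝕜 → 𝕜) (k : ℕ) :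
    maclaurinCoeff (deriv f) k = (k + 1) * maclaurinCoeff f (k + 1) := by
  rw [maclaurinCoeff, maclaurinCoeff, iteratedDeriv_succ', Nat.factorial_succ]
  push_cast
  field_simp

lemma maclaurinCoeff_fun_sub (hf : ContDiffAt 𝕜 k f 0) (hg : ContDiffAt 𝕜 k g 0) :
    maclaurinCoeff (fun x => f x - g x) k = maclaurinCoeff f k - maclaurinCoeff g k := by
  rw [maclaurinCoeff, iteratedDeriv_fun_sub hf hg, sub_div]; rfl

lemma maclaurinCoeff_fun_add (hf : ContDiffAt 𝕜 k f 0) (hg : ContDiffAt 𝕜 k g 0) :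
    maclaurinCoeff (fun x => f x + g x) k = maclaurinCoeff f k + maclaurinCoeff g k := by
  rw [maclaurinCoeff, iteratedDeriv_fun_add hf hg, add_div]; rfl

lemma maclaurinCoeff_const_mul (c : 𝕜) (f : 𝕜 → 𝕜) (k : ℕ) :
    maclaurinCoeff (fun x => c * f x) k = c * maclaurinCoeff f k := by
  rw [maclaurinCoeff, iteratedDeriv_const_mul_field, mul_div_assoc]; rfl

lemma maclaurinCoeff_fun_mul [CharZero 𝕜] (hf : ContDiffAt 𝕜 k f 0) (hg : ContDiffAt 𝕜 k g 0) :
    maclaurinCoeff (fun x => f x * g x) k =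
      ∑ i ∈ Finset.range (k + 1), maclaurinCoeff f i * maclaurinCoeff g (k - i) := by
  rw [maclaurinCoeff, iteratedDeriv_fun_mul hf hg, Finset.sum_div]
  refine Finset.sum_congr rfl fun i hi => ?_
  have hik : i ≤ k := Nat.lt_succ_iff.mp (Finset.mem_range.mp hi)
  have hk : (k ! : 𝕜) ≠ 0 := Nat.cast_ne_zero.2 k.factorial_ne_zero
  rw [maclaurinCoeff, maclaurinCoeff, Nat.cast_choose 𝕜 hik]
  field_simp

lemma maclaurinCoeff_id_mul [CharZero 𝕜] (hf : ContDiffAt 𝕜 (k + 1 : ℕ) f 0) :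
    maclaurinCoeff (fun x => x * f x) (k + 1) = maclaurinCoeff f k := by
  rw [maclaurinCoeff_fun_mul (f := fun x => x) contDiffAt_id hf, Finset.sum_eq_single 1]
  · simp [maclaurinCoeff]
  · intro i _ hi
    simp [maclaurinCoeff, iteratedDeriv_fun_id_zero, hi]
  · simp

section SmoothOde

variable [CharZero 𝕜] {y : 𝕜 → 𝕜}

lemma maclaurinCoeff_succ_of_ode (hy : ContDiffAt 𝕜 ∞ y 0)
    (hode : (fun v => y v - v * deriv y v) =ᶠ[𝓝 0]
      fun v => 2 * (y v * (y v * y v)) + 2 * (v * (y v * y v))) (k : ℕ) :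
    maclaurinCoeff y (k + 1) - (k + 1) * maclaurinCoeff y (k + 1) =
      2 * maclaurinCoeff (fun v => y v * (y v * y v)) (k + 1) +
        2 * maclaurinCoeff (fun v => y v * y v) k := by
  have hy' : ∀ n : ℕ, ContDiffAt 𝕜 n y 0 := fun n => hy.of_le (by exact_mod_cast le_top)
  have hdy : ∀ n : ℕ, ContDiffAt 𝕜 n (deriv y) 0 := fun n =>
    hy.derivWithin (m := n) (by exact_mod_cast le_top)
  have hyy : ∀ n : ℕ, ContDiffAt 𝕜 n (fun v => y v * y v) 0 := fun n => (hy' n).mul (hy' n)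
  have h := hode.maclaurinCoeff_eq (k + 1)
  rwa [maclaurinCoeff_fun_sub (hy' _) (contDiffAt_fun_id.mul (hdy _)),
    maclaurinCoeff_id_mul (hdy _), maclaurinCoeff_deriv,
    maclaurinCoeff_fun_add (contDiffAt_const.mul ((hy' _).mul (hyy _)))
      (contDiffAt_const.mul (contDiffAt_fun_id.mul (hyy _))),
    maclaurinCoeff_const_mul, maclaurinCoeff_const_mul, maclaurinCoeff_id_mul (hyy _)] at h

lemma maclaurinCoeff_sq (hy : ContDiffAt 𝕜 ∞ y 0) (k : ℕ) :
    maclaurinCoeff (fun v => y v * y v) k =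
      ∑ j ∈ Finset.range (k + 1), maclaurinCoeff y j * maclaurinCoeff y (k - j) :=
  maclaurinCoeff_fun_mul (hy.of_le (by exact_mod_cast le_top)) (hy.of_le (by exact_mod_cast le_top))

lemma maclaurinCoeff_cube (hy : ContDiffAt 𝕜 ∞ y 0) (k : ℕ) :
    maclaurinCoeff (fun v => y v * (y v * y v)) k =
      ∑ i ∈ Finset.range (k + 1), maclaurinCoeff y i *
        ∑ j ∈ Finset.range (k - i + 1), maclaurinCoeff y j * maclaurinCoeff y (k - i - j) := by
  have hy' : ContDiffAt 𝕜 k y 0 := hy.of_le (by exact_mod_cast le_top)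
  rw [maclaurinCoeff_fun_mul hy' (hy'.mul hy')]
  refine Finset.sum_congr rfl fun i _ => ?_
  rw [maclaurinCoeff_sq hy]

end SmoothOde

end Maclaurin

lemma maclaurinCoeffs_of_ode {y : ℝ → ℝ} (hy : ContDiffAt ℝ ∞ y 0)
    (hode : (fun v => y v - v * deriv y v) =ᶠ[𝓝 0]
      fun v => 2 * (y v * (y v * y v)) + 2 * (v * (y v * y v)))
    (h0 : y 0 = √2 / 2) :
    maclaurinCoeff y 1 = -(1/3) ∧ maclaurinCoeff y 2 = √2 / 12 ∧
      maclaurinCoeff y 3 = -(4/135) ∧ maclaurinCoeff y 4 = √2 / 432 := by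
  have e := fun k => maclaurinCoeff_succ_of_ode hy hode k
  simp only [maclaurinCoeff_cube hy, maclaurinCoeff_sq hy] at e
  have e1 := e 0
  have e2 := e 1
  have e3 := e 2
  have e4 := e 3
  norm_num [Finset.sum_range_succ] at e1 e2 e3 e4
  -- once `c 0 * c 0 = 1 / 2`, equation `eₙ` is linear in `c n`, with coefficient `-(n + 2)`
  set c := maclaurinCoeff y
  have hc0 : c 0 = √2 / 2 := (maclaurinCoeff_zero y).trans h0
  have hsq : c 0 * c 0 = 1 / 2 := by
    rw [hc0, div_mul_div_comm, Real.mul_self_sqrt zero_le_two]; norm_num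
  have h1 : c 1 = -(1/3) := by linear_combination (-1/3) * e1 - (2 * c 1 + 2/3) * hsq
  rw [h1] at e2 e3 e4
  have h2 : c 2 = c 0 / 6 := by linear_combination (-1/4) * e2 - (3/2) * c 2 * hsq
  rw [h2] at e3 e4
  have h3 : c 3 = -(4/135) := by linear_combination (-1/5) * e3 - (6/5) * c 3 * hsq
  rw [h3] at e4
  have h4 : c 4 = c 0 / 216 := by linear_combination (-1/6) * e4 - (c 4 + c 0 / 36) * hsq
  refine ⟨h1, ?_, h3, ?_⟩
  · rw [h2, hc0]; ring
  · rw [h4, hc0]; ring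

noncomputable def logDefect (x : ℝ) : ℝ := x - log (1 + x)

noncomputable def logDefectRatio (x : ℝ) : ℝ := if x = 0 then 1 / 2 else logDefect x / x ^ 2

noncomputable def signedRootLogDefect (x : ℝ) : ℝ := sign x * √(logDefect x)

lemma hasSum_logDefectRatio {x : ℝ} (hx : |x| < 1) :
    HasSum (fun n : ℕ => x ^ n * ((-1) ^ n / (n + 2))) (logDefectRatio x) := by
  rcases eq_or_ne x 0 with rfl | hx0
  · convert hasSum_single (f := fun n : ℕ => (0 : ℝ) ^ n * ((-1) ^ n / (n + 2))) 0 _ using 1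
    · simp [logDefectRatio]
    · intro n hn; simp [zero_pow hn]
  have hlog : HasSum (fun n : ℕ => (-x) ^ (n + 1) / (n + 1)) (-log (1 + x)) := by
    simpa using hasSum_pow_div_log_of_abs_lt_one (x := -x) (by rwa [abs_neg])
  have htail := ((hasSum_nat_add_iff' 1).mpr hlog).mul_left (x ^ 2)⁻¹
  have hterm : (fun n : ℕ => x ^ n * ((-1) ^ n / (n + 2))) =
      fun n : ℕ => (x ^ 2)⁻¹ * ((-x) ^ (n + 1 + 1) / ((n + 1 : ℕ) + 1)) := by
    funext n
    rw [neg_pow, pow_succ, pow_succ]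
    push_cast
    field_simp
    ring
  have hsum : logDefectRatio x =
      (x ^ 2)⁻¹ * (-log (1 + x) - ∑ i ∈ Finset.range 1, (-x) ^ (i + 1) / (i + 1)) := by
    simp only [logDefectRatio, if_neg hx0, logDefect, Finset.range_one, Finset.sum_singleton,
      zero_add, pow_one, Nat.cast_zero, div_one, sub_neg_eq_add]
    field_simp
    ring
  rwa [hterm, hsum]

lemma analyticAt_logDefectRatio : AnalyticAt ℝ logDefectRatio 0 := by
  let p := FormalMultilinearSeries.ofScalars ℝ fun n : ℕ => (-1 : ℝ) ^ n / (n + 2)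
  have hp : 1 ≤ p.radius := p.le_radius_of_bound 1 fun n => by
    rw [FormalMultilinearSeries.ofScalars_norm, norm_div, norm_pow, norm_neg, norm_one, one_pow]
    simp only [NNReal.coe_one, one_pow, mul_one]
    rw [Real.norm_of_nonneg (by positivity), div_le_one (by positivity)]
    linarith
  refine ⟨p, 1, hp, one_pos, fun {x} hx => ?_⟩
  have hx' : ‖x‖₊ < 1 := by simpa [enorm_eq_nnnorm] using hx
  simpa [p, FormalMultilinearSeries.ofScalars_apply_eq] using
    hasSum_logDefectRatio (by simpa [← NNReal.coe_lt_coe] using hx')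

lemma logDefect_zero : logDefect 0 = 0 := by simp [logDefect]

lemma logDefect_nonneg {x : ℝ} (hx : -1 < x) : 0 ≤ logDefect x := by
  have := log_le_sub_one_of_pos (show 0 < 1 + x by linarith)
  rw [logDefect]; linarith

lemma hasDerivAt_logDefect {x : ℝ} (hx : -1 < x) : HasDerivAt logDefect (x / (1 + x)) x := by
  have h1 : 1 + x ≠ 0 := by linarith
  rw [show x / (1 + x) = 1 - 1 / (1 + x) by field_simp; ring]
  exact (hasDerivAt_id' x).fun_sub (((hasDerivAt_id' x).const_add 1).log h1)

lemma logDefect_strictMonoOn : StrictMonoOn logDefect (Ici 0) := by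
  intro a (ha : 0 ≤ a) b _ hab
  have ha1 : 0 < 1 + a := by linarith
  have hb1 : 0 < 1 + b := by linarith
  have hlog : log ((1 + b) / (1 + a)) < (1 + b) / (1 + a) - 1 :=
    log_lt_sub_one_of_pos (by positivity) (by rw [ne_eq, div_eq_one_iff_eq ha1.ne']; linarith)
  have hquot : (1 + b) / (1 + a) - 1 ≤ b - a := by
    rw [div_sub_one ha1.ne', div_le_iff₀ ha1]; nlinarith
  rw [log_div hb1.ne' ha1.ne'] at hlog
  rw [logDefect, logDefect]; linarith

lemma logDefect_strictAntiOn : StrictAntiOn logDefect (Ioc (-1) 0) := by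
  intro a ⟨ha, _⟩ b ⟨hb, hb0⟩ hab
  have hlog : log ((1 + a) / (1 + b)) < (1 + a) / (1 + b) - 1 :=
    log_lt_sub_one_of_pos (div_pos (by linarith) (by linarith))
      (by rw [ne_eq, div_eq_one_iff_eq (by linarith)]; linarith)
  have hquot : (1 + a) / (1 + b) - 1 ≤ a - b := by
    rw [div_sub_one (by linarith), div_le_iff₀ (by linarith)]; nlinarith
  rw [log_div (by linarith) (by linarith)] at hlog
  rw [logDefect, logDefect]; linarith

lemma signedRootLogDefect_zero : signedRootLogDefect 0 = 0 := by
  simp [signedRootLogDefect]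

lemma signedRootLogDefect_of_nonneg {x : ℝ} (hx : 0 ≤ x) :
    signedRootLogDefect x = √(logDefect x) := by
  rcases hx.eq_or_lt with rfl | hx
  · simp [signedRootLogDefect, logDefect_zero]
  · rw [signedRootLogDefect, sign_of_pos hx, one_mul]

lemma signedRootLogDefect_of_nonpos {x : ℝ} (hx : x ≤ 0) :
    signedRootLogDefect x = -√(logDefect x) := by
  rcases hx.eq_or_lt with rfl | hx
  · simp [signedRootLogDefect, logDefect_zero]
  · rw [signedRootLogDefect, sign_of_neg hx, neg_one_mul]

lemma signedRootLogDefect_strictMonoOn : StrictMonoOn signedRootLogDefect (Ioi (-1)) := by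
  have hneg : StrictMonoOn signedRootLogDefect (Ioc (-1) 0) := fun a ha b hb hab => by
    rw [signedRootLogDefect_of_nonpos ha.2, signedRootLogDefect_of_nonpos hb.2, neg_lt_neg_iff]
    exact sqrt_lt_sqrt (logDefect_nonneg hb.1) (logDefect_strictAntiOn ha hb hab)
  have hpos : StrictMonoOn signedRootLogDefect (Ici 0) := fun a ha b hb hab => by
    rw [signedRootLogDefect_of_nonneg ha, signedRootLogDefect_of_nonneg hb]
    exact sqrt_lt_sqrt (logDefect_nonneg (by linarith [mem_Ici.mp ha]))
      (logDefect_strictMonoOn ha hb hab)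
  rw [← Ioc_union_Ici_eq_Ioi (show (-1 : ℝ) < 0 by norm_num)]
  exact hneg.union hpos ⟨⟨by norm_num, le_rfl⟩, fun _ hx => hx.2⟩ ⟨self_mem_Ici, fun _ hx => hx⟩

lemma sq_signedRootLogDefect {x : ℝ} (hx : -1 < x) : signedRootLogDefect x ^ 2 = logDefect x := by
  rcases le_total x 0 with h | h
  · rw [signedRootLogDefect_of_nonpos h, neg_sq, sq_sqrt (logDefect_nonneg hx)]
  · rw [signedRootLogDefect_of_nonneg h, sq_sqrt (logDefect_nonneg hx)]

lemma signedRootLogDefect_eq_mul_sqrt {x : ℝ} (hx : -1 < x) :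
    signedRootLogDefect x = x * √(logDefectRatio x) := by
  rcases eq_or_ne x 0 with rfl | hx0
  · simp [signedRootLogDefect]
  rw [logDefectRatio, if_neg hx0, sqrt_div' _ (sq_nonneg x), sqrt_sq_eq_abs]
  rcases hx0.lt_or_gt with h | h
  · rw [signedRootLogDefect_of_nonpos h.le, abs_of_neg h]
    field_simp
  · rw [signedRootLogDefect_of_nonneg h.le, abs_of_pos h]
    field_simp

lemma logDefectRatio_zero : logDefectRatio 0 = 1 / 2 := if_pos rfl

lemma contDiffAt_sqrt_logDefectRatio {n : WithTop ℕ∞} :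
    ContDiffAt ℝ n (fun x => √(logDefectRatio x)) 0 :=
  (contDiffAt_sqrt (by norm_num [logDefectRatio_zero])).comp 0 analyticAt_logDefectRatio.contDiffAt

lemma sqrt_logDefectRatio_zero : √(logDefectRatio 0) = √2 / 2 := by
  rw [logDefectRatio_zero, sqrt_div' _ zero_le_two, sqrt_one,
    div_eq_div_iff (by positivity) two_ne_zero, one_mul, mul_self_sqrt zero_le_two]

section RightInverse

variable {f : ℝ → ℝ}

lemma apply_signedRootLogDefect_of_rightInverse
    (hf : ∀ u, f u ∈ Set.Ioi (-1 : ℝ) ∧ signedRootLogDefect (f u) = u) {x : ℝ} (hx : -1 < x) :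
    f (signedRootLogDefect x) = x :=
  signedRootLogDefect_strictMonoOn.injOn (hf _).1 hx (hf _).2

lemma apply_zero_of_rightInverse
    (hf : ∀ u, f u ∈ Set.Ioi (-1 : ℝ) ∧ signedRootLogDefect (f u) = u) : f 0 = 0 := by
  simpa [signedRootLogDefect_zero] using
    apply_signedRootLogDefect_of_rightInverse hf neg_one_lt_zero

lemma contDiffAt_of_rightInverse
    (hf : ∀ u, f u ∈ Set.Ioi (-1 : ℝ) ∧ signedRootLogDefect (f u) = u) : ContDiffAt ℝ ∞ f 0 := by
  have hg : ContDiffAt ℝ ∞ (fun x => x * √(logDefectRatio x)) 0 :=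
    contDiffAt_fun_id.mul contDiffAt_sqrt_logDefectRatio
  have hg' : HasDerivAt (fun x => x * √(logDefectRatio x)) (√(logDefectRatio 0)) 0 := by
    simpa using (hasDerivAt_id' 0).fun_mul
      (contDiffAt_sqrt_logDefectRatio (n := 1).differentiableAt one_ne_zero).hasDerivAt
  have hinv : ∀ᶠ x in 𝓝 0, f (x * √(logDefectRatio x)) = x := by
    filter_upwards [Ioi_mem_nhds neg_one_lt_zero] with x hx
    rw [← signedRootLogDefect_eq_mul_sqrt hx, apply_signedRootLogDefect_of_rightInverse hf hx]
  simpa using hg.to_local_left_inverse hg' (by rw [sqrt_logDefectRatio_zero]; positivity)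
    (by simp) hinv

variable {y : ℝ → ℝ}

lemma mul_eq_of_rightInverse
    (hf : ∀ u, f u ∈ Set.Ioi (-1 : ℝ) ∧ signedRootLogDefect (f u) = u)
    (hy : ∀ v, y v = if v = 0 then √2 / 2 else v / f v) (v : ℝ) : f v * y v = v := by
  rcases eq_or_ne v 0 with rfl | hv
  · rw [apply_zero_of_rightInverse hf, zero_mul]
  have hfv : f v ≠ 0 := fun h => hv (by rw [← (hf v).2, h, signedRootLogDefect_zero])
  rw [hy, if_neg hv, mul_div_cancel₀ _ hfv]

lemma eq_sqrt_logDefectRatio_of_rightInverse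
    (hf : ∀ u, f u ∈ Set.Ioi (-1 : ℝ) ∧ signedRootLogDefect (f u) = u)
    (hy : ∀ v, y v = if v = 0 then √2 / 2 else v / f v) (v : ℝ) :
    y v = √(logDefectRatio (f v)) := by
  rcases eq_or_ne (f v) 0 with h | h
  · have hv : v = 0 := by rw [← (hf v).2, h, signedRootLogDefect_zero]
    rw [hy, if_pos hv, h, sqrt_logDefectRatio_zero]
  · apply mul_left_cancel₀ h
    rw [mul_eq_of_rightInverse hf hy, ← signedRootLogDefect_eq_mul_sqrt (hf v).1, (hf v).2]

lemma contDiffAt_of_rightInverse_of_eq_div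
    (hf : ∀ u, f u ∈ Set.Ioi (-1 : ℝ) ∧ signedRootLogDefect (f u) = u)
    (hy : ∀ v, y v = if v = 0 then √2 / 2 else v / f v) : ContDiffAt ℝ ∞ y 0 := by
  have hcomp : y = (fun x => √(logDefectRatio x)) ∘ f :=
    funext (eq_sqrt_logDefectRatio_of_rightInverse hf hy)
  rw [hcomp]
  refine ContDiffAt.comp 0 ?_ (contDiffAt_of_rightInverse hf)
  rw [apply_zero_of_rightInverse hf]
  exact contDiffAt_sqrt_logDefectRatio

lemma ode_of_rightInverse
    (hf : ∀ u, f u ∈ Set.Ioi (-1 : ℝ) ∧ signedRootLogDefect (f u) = u)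
    (hy : ∀ v, y v = if v = 0 then √2 / 2 else v / f v) :
    (fun v => y v - v * deriv y v) =ᶠ[𝓝 0]
      fun v => 2 * (y v * (y v * y v)) + 2 * (v * (y v * y v)) := by
  have hdiff : ∀ {g : ℝ → ℝ}, ContDiffAt ℝ ∞ g 0 → ∀ᶠ v in 𝓝 0, DifferentiableAt ℝ g v :=
    fun hg => ((hg.of_le (by exact_mod_cast le_top : ((1 : ℕ) : WithTop ℕ∞) ≤ ∞)).eventually
      (by simp)).mono fun v hv => hv.differentiableAt one_ne_zero
  filter_upwards [hdiff (contDiffAt_of_rightInverse hf),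
    hdiff (contDiffAt_of_rightInverse_of_eq_div hf hy)] with v hfv hyv
  rcases eq_or_ne v 0 with rfl | hv
  · have hs : √2 ^ 2 = 2 := sq_sqrt zero_le_two
    rw [hy, if_pos rfl]
    linear_combination (-√2 / 4) * hs
  have hfy := mul_eq_of_rightInverse hf hy v
  have hfy' : deriv f v * y v + f v * deriv y v = 1 :=
    (hfv.hasDerivAt.fun_mul hyv.hasDerivAt).unique (by
      simpa [mul_eq_of_rightInverse hf hy] using hasDerivAt_id' v)
  have hlog' : f v * deriv f v = 2 * v * (1 + f v) := by
    have hlog : (fun v => logDefect (f v)) = fun v => v ^ 2 :=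
      funext fun v => by rw [← sq_signedRootLogDefect (hf v).1, (hf v).2]
    have h := ((hasDerivAt_logDefect (hf v).1).comp v hfv.hasDerivAt).unique
      (hlog ▸ hasDerivAt_pow 2 v)
    have h1 : 1 + f v ≠ 0 := by linarith [(hf v).1.out]
    field_simp at h
    linear_combination h
  apply mul_left_cancel₀ hv
  linear_combination (deriv y v * (v + f v * y v) + 2 * v * y v ^ 2 - y v) * hfy
    - f v * y v ^ 2 * hfy' + y v ^ 3 * hlog'

end RightInverse

theorem stmt_14 (f : ℝ → ℝ)
    (hf : ∀ u : ℝ, f u ∈ Set.Ioi (-1 : ℝ) ∧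
      Real.sign (f u) * Real.sqrt (f u - Real.log (1 + f u)) = u)
    (y : ℝ → ℝ)
    (hy : ∀ v : ℝ, y v = if v = 0 then Real.sqrt 2 / 2 else v / f v)
    (a : ℕ → ℝ)
    (ha : ∀ k : ℕ, a k = iteratedDeriv k y 0 / (Nat.factorial k)) :
    a 0 = Real.sqrt 2 / 2 ∧ a 1 = -(1/3) ∧ a 2 = Real.sqrt 2 / 12 ∧
    a 3 = -(4/135) ∧ a 4 = Real.sqrt 2 / 432 := by
  obtain rfl : a = maclaurinCoeff y := funext ha
  have h0 : y 0 = √2 / 2 := by rw [hy, if_pos rfl]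
  exact ⟨(maclaurinCoeff_zero y).trans h0, maclaurinCoeffs_of_ode
    (contDiffAt_of_rightInverse_of_eq_div hf hy) (ode_of_rightInverse hf hy) h0⟩
end

section
/- As s → +∞, Γ(s+1) = (s/e)^s √(2πs) · [1 + 1/(12s) + 1/(288s²) - 139/(51840s³) + o(1/s³)]. -/
/-!
Write `μ(x) = log Γ(x+1) - log ((x/e)^x √(2πx))`. The functional equation of `Γ` gives
`μ(x) - μ(x+1) = (x + 1/2) log (1 + 1/x) - 1`, and `μ(x + n) → 0` as `n → ∞` by Stirling's
formula for `n!` combined with Euler's limit formula for `Γ`. The truncated Stirling series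
`A(x) = 1/(12x) - 1/(360x³)` satisfies the same difference equation up to `O(x⁻⁵)`, so
telescoping gives `|μ(x) - A(x)| ≤ 3/x⁴`. Expanding `exp A(x)` to third order produces the
coefficients `1/12, 1/288, -139/51840`.
-/

open Real Filter Asymptotics Topology

noncomputable def logStirling (x : ℝ) : ℝ := x * log x - x + log (2 * π * x) / 2

noncomputable def stirlingError (x : ℝ) : ℝ := log (Gamma (x + 1)) - logStirling x

noncomputable def stirlingCorrection (x : ℝ) : ℝ := 1 / (12 * x) - 1 / (360 * x ^ 3)

noncomputable def logOneAddTaylor5 (t : ℝ) : ℝ := t - t ^ 2 / 2 + t ^ 3 / 3 - t ^ 4 / 4 + t ^ 5 / 5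

noncomputable def expTaylor3 (u : ℝ) : ℝ := 1 + u + u ^ 2 / 2 + u ^ 3 / 6

lemma exp_logStirling {x : ℝ} (hx : 0 < x) :
    exp (logStirling x) = (x / exp 1) ^ x * √(2 * π * x) := by
  rw [logStirling, exp_add, sqrt_eq_rpow, rpow_def_of_pos (by positivity),
    rpow_def_of_pos (by positivity), log_div hx.ne' (exp_ne_zero 1), log_exp]
  ring_nf

lemma Gamma_add_one_div_eq_exp_stirlingError {x : ℝ} (hx : 0 < x) :
    Gamma (x + 1) / ((x / exp 1) ^ x * √(2 * π * x)) = exp (stirlingError x) := by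
  rw [stirlingError, exp_sub, exp_log (Gamma_pos_of_pos (by linarith)), exp_logStirling hx]

lemma stirlingError_sub_stirlingError_add_one {x : ℝ} (hx : 0 < x) :
    stirlingError x - stirlingError (x + 1) = (x + 1 / 2) * log (1 + 1 / x) - 1 := by
  have hx1 : 0 < x + 1 := by linarith
  have hΓ : log (Gamma (x + 1 + 1)) = log (x + 1) + log (Gamma (x + 1)) := by
    rw [Gamma_add_one hx1.ne', log_mul hx1.ne' (Gamma_pos_of_pos hx1).ne']
  have h2π : 0 < 2 * π := by positivity
  rw [show 1 + 1 / x = (x + 1) / x by field_simp, log_div hx1.ne' hx.ne']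
  simp only [stirlingError, logStirling, hΓ, log_mul h2π.ne' hx.ne', log_mul h2π.ne' hx1.ne']
  ring

lemma stirlingError_natCast {n : ℕ} (hn : n ≠ 0) :
    stirlingError n = log (Stirling.stirlingSeq n) - log π / 2 := by
  have hn0 : (0 : ℝ) < n := by positivity
  rw [stirlingError, logStirling, Gamma_nat_eq_factorial, Stirling.log_stirlingSeq_formula,
    log_div hn0.ne' (exp_ne_zero 1), log_exp,
    show 2 * π * (n : ℝ) = (2 * n) * π by ring, log_mul (by positivity) pi_pos.ne']
  ring

lemma tendsto_stirlingError_natCast :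
    Tendsto (fun n : ℕ => stirlingError n) atTop (𝓝 0) := by
  have hlog := ((continuousAt_log (sqrt_pos.mpr pi_pos).ne').tendsto.comp
    Stirling.tendsto_stirlingSeq_sqrt_pi).sub_const (log π / 2)
  rw [log_sqrt pi_pos.le, sub_self] at hlog
  refine hlog.congr' ?_
  filter_upwards [eventually_ne_atTop 0] with n hn
  exact (stirlingError_natCast hn).symm

lemma Gamma_add_natCast_add_one {s : ℝ} (hs : 0 < s) (n : ℕ) :
    Gamma (s + n + 1) = Gamma s * ∏ j ∈ Finset.range (n + 1), (s + j) := by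
  induction n with
  | zero => simp [Gamma_add_one hs.ne', mul_comm]
  | succ n ih =>
    rw [Nat.cast_succ, ← add_assoc, Gamma_add_one (by positivity), ih,
      Finset.prod_range_succ _ (n + 1), Nat.cast_succ]
    ring

lemma tendsto_Gamma_add_natCast_add_one_div {s : ℝ} (hs : 0 < s) :
    Tendsto (fun n : ℕ => Gamma (s + n + 1) / ((n : ℝ) ^ s * n.factorial)) atTop (𝓝 1) := by
  have hΓ := Gamma_pos_of_pos hs
  have hlim := (tendsto_const_nhds (x := Gamma s)).div (GammaSeq_tendsto_Gamma s) hΓ.ne'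
  rw [div_self hΓ.ne'] at hlim
  refine hlim.congr fun n => ?_
  rw [Pi.div_apply, Real.GammaSeq, Gamma_add_natCast_add_one hs n, div_div_eq_mul_div]

lemma logStirling_add {x s : ℝ} (hx : 0 < x) (hxs : 0 < x + s) :
    logStirling (x + s) = logStirling x + s * log x - s + (x + s + 1 / 2) * log (1 + s / x) := by
  have h2π : 0 < 2 * π := by positivity
  rw [show x + s = x * (1 + s / x) by field_simp] at hxs ⊢
  have hs' : 0 < 1 + s / x := pos_of_mul_pos_right hxs hx.le
  simp only [logStirling, ← mul_assoc, log_mul hx.ne' hs'.ne',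
    log_mul (mul_pos h2π hx).ne' hs'.ne']
  field_simp
  ring

lemma tendsto_add_mul_log_one_add_div (s c : ℝ) :
    Tendsto (fun x : ℝ => (x + c) * log (1 + s / x)) atTop (𝓝 s) := by
  have hlog : Tendsto (fun x : ℝ => log (1 + s / x)) atTop (𝓝 0) := by
    have h1 : Tendsto (fun x : ℝ => 1 + s / x) atTop (𝓝 1) := by
      simpa using tendsto_const_nhds.add (tendsto_const_nhds.div_atTop (tendsto_id (α := ℝ)))
    simpa [Function.comp_def] using (continuousAt_log one_ne_zero).tendsto.comp h1
  have := (tendsto_mul_log_one_add_div_atTop s).add (hlog.const_mul c)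
  rw [mul_zero, add_zero] at this
  exact this.congr fun x => by ring

lemma stirlingError_add {x s : ℝ} (hx : 0 < x) (hxs : 0 < x + s) :
    stirlingError (x + s) = log (Gamma (x + s + 1) / (x ^ s * Gamma (x + 1))) + stirlingError x +
      (s - (x + s + 1 / 2) * log (1 + s / x)) := by
  have hΓxs : 0 < Gamma (x + s + 1) := Gamma_pos_of_pos (by linarith)
  have hΓx : 0 < Gamma (x + 1) := Gamma_pos_of_pos (by linarith)
  rw [log_div hΓxs.ne' (mul_pos (rpow_pos_of_pos hx s) hΓx).ne',
    log_mul (rpow_pos_of_pos hx s).ne' hΓx.ne', log_rpow hx,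
    stirlingError, stirlingError, logStirling_add hx hxs]
  ring

lemma tendsto_stirlingError_add_natCast {s : ℝ} (hs : 0 < s) :
    Tendsto (fun n : ℕ => stirlingError (s + n)) atTop (𝓝 0) := by
  have hlogΓ := (continuousAt_log one_ne_zero).tendsto.comp
    (tendsto_Gamma_add_natCast_add_one_div hs)
  have hS := (tendsto_add_mul_log_one_add_div s (s + 1 / 2)).comp tendsto_natCast_atTop_atTop
  have hlim := (hlogΓ.add tendsto_stirlingError_natCast).add (hS.const_sub s)
  rw [log_one, zero_add, sub_self, add_zero] at hlim
  refine hlim.congr' ?_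
  filter_upwards [eventually_ne_atTop 0] with n hn
  rw [add_comm s (n : ℝ), stirlingError_add (by positivity) (by positivity), Gamma_nat_eq_factorial,
    add_comm (n : ℝ) s]
  simp only [Function.comp_apply]
  ring

lemma abs_le_of_abs_sub_succ_le {u v : ℕ → ℝ} (hu : Tendsto u atTop (𝓝 0))
    (hv : Tendsto v atTop (𝓝 0)) (h : ∀ n, |u n - u (n + 1)| ≤ v n - v (n + 1)) :
    |u 0| ≤ v 0 := by
  have hpartial : ∀ n, |u 0 - u n| ≤ v 0 - v n := by
    intro n
    induction n with
    | zero => simp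
    | succ n ih =>
      calc |u 0 - u (n + 1)| ≤ |u 0 - u n| + |u n - u (n + 1)| := abs_sub_le _ _ _
        _ ≤ v 0 - v (n + 1) := by linarith [h n]
  have hlimu := ((tendsto_const_nhds (x := u 0)).sub hu).abs
  have hlimv := (tendsto_const_nhds (x := v 0)).sub hv
  rw [sub_zero] at hlimu hlimv
  exact le_of_tendsto_of_tendsto' hlimu hlimv hpartial

lemma abs_log_one_add_inv_sub_logOneAddTaylor5_le {x : ℝ} (hx : 2 ≤ x) :
    |log (1 + 1 / x) - logOneAddTaylor5 (1 / x)| ≤ 2 / x ^ 6 := by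
  have hx0 : 0 < x := by linarith
  have ht : |-(1 / x)| = 1 / x := by rw [abs_neg, abs_of_pos (by positivity)]
  have ht1 : 1 / x ≤ 1 / 2 := one_div_le_one_div_of_le two_pos hx
  have h := abs_log_sub_add_sum_range_le (x := -(1 / x)) (by rw [ht]; linarith) 5
  simp only [Finset.sum_range_succ, Finset.sum_range_zero, sub_neg_eq_add, ht] at h
  calc |log (1 + 1 / x) - logOneAddTaylor5 (1 / x)|
      = |_| := by congr 1; simp only [logOneAddTaylor5]; push_cast; ring
    _ ≤ (1 / x) ^ (5 + 1) / (1 - 1 / x) := h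
    _ ≤ (1 / x) ^ 6 / (1 / 2) := by gcongr; linarith
    _ = 2 / x ^ 6 := by field_simp

lemma abs_logOneAddTaylor5_sub_stirlingCorrection_le {x : ℝ} (hx : 0 < x) :
    |(x + 1 / 2) * logOneAddTaylor5 (1 / x) - 1 -
      (stirlingCorrection x - stirlingCorrection (x + 1))| ≤ 1 / x ^ 5 := by
  have hid : (x + 1 / 2) * logOneAddTaylor5 (1 / x) - 1 -
      (stirlingCorrection x - stirlingCorrection (x + 1)) =
      (120 * x ^ 8 + 440 * x ^ 7 + 590 * x ^ 6 + 342 * x ^ 5 + 72 * x ^ 4) /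
        (720 * x ^ 9 * (x + 1) ^ 4) := by
    simp only [logOneAddTaylor5, stirlingCorrection]
    field_simp
    ring
  rw [hid, abs_of_pos (by positivity), div_le_div_iff₀ (by positivity) (by positivity)]
  nlinarith [pow_pos hx 4, pow_pos hx 5, pow_pos hx 6, pow_pos hx 7, pow_pos hx 8, pow_pos hx 9,
    pow_pos hx 10, pow_pos hx 11, pow_pos hx 12]

lemma abs_stirlingError_sub_stirlingCorrection_sub_add_one_le {x : ℝ} (hx : 2 ≤ x) :
    |(stirlingError x - stirlingCorrection x) -
      (stirlingError (x + 1) - stirlingCorrection (x + 1))| ≤ 3 / x ^ 4 - 3 / (x + 1) ^ 4 := by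
  have hx0 : 0 < x := by linarith
  have hsplit : (stirlingError x - stirlingCorrection x) -
      (stirlingError (x + 1) - stirlingCorrection (x + 1)) =
      ((x + 1 / 2) * logOneAddTaylor5 (1 / x) - 1 -
        (stirlingCorrection x - stirlingCorrection (x + 1))) +
      (x + 1 / 2) * (log (1 + 1 / x) - logOneAddTaylor5 (1 / x)) := by
    rw [sub_sub_sub_comm, stirlingError_sub_stirlingError_add_one hx0]
    ring
  have hlog : |(x + 1 / 2) * (log (1 + 1 / x) - logOneAddTaylor5 (1 / x))| ≤ 3 / x ^ 5 := by
    rw [abs_mul, abs_of_pos (by linarith)]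
    calc (x + 1 / 2) * |log (1 + 1 / x) - logOneAddTaylor5 (1 / x)|
        ≤ (x + 1 / 2) * (2 / x ^ 6) := by
          gcongr; exact abs_log_one_add_inv_sub_logOneAddTaylor5_le hx
      _ ≤ 3 / x ^ 5 := by
          rw [div_eq_mul_inv, div_eq_mul_inv, show x ^ 6 = x * x ^ 5 by ring]
          field_simp
          nlinarith
  have hstep : 4 / x ^ 5 ≤ 3 / x ^ 4 - 3 / (x + 1) ^ 4 := by
    rw [div_sub_div _ _ (by positivity) (by positivity),
      div_le_div_iff₀ (by positivity) (by positivity)]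
    nlinarith [pow_pos hx0 4, pow_pos hx0 5, pow_pos hx0 6, pow_pos hx0 7, pow_pos hx0 8]
  calc _ ≤ 1 / x ^ 5 + 3 / x ^ 5 := by
        rw [hsplit]
        exact (abs_add_le _ _).trans
          (add_le_add (abs_logOneAddTaylor5_sub_stirlingCorrection_le hx0) hlog)
    _ = 4 / x ^ 5 := by ring
    _ ≤ _ := hstep

lemma tendsto_stirlingCorrection : Tendsto stirlingCorrection atTop (𝓝 0) := by
  have h12 : Tendsto (fun x : ℝ => 1 / (12 * x)) atTop (𝓝 0) :=
    tendsto_const_nhds.div_atTop ((tendsto_id (α := ℝ)).const_mul_atTop (by norm_num))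
  have h360 : Tendsto (fun x : ℝ => 1 / (360 * x ^ 3)) atTop (𝓝 0) :=
    tendsto_const_nhds.div_atTop ((tendsto_pow_atTop (by norm_num)).const_mul_atTop (by norm_num))
  have h := h12.sub h360
  rwa [sub_zero] at h

lemma abs_stirlingError_sub_stirlingCorrection_le {s : ℝ} (hs : 2 ≤ s) :
    |stirlingError s - stirlingCorrection s| ≤ 3 / s ^ 4 := by
  have hshift : Tendsto (fun n : ℕ => s + n) atTop atTop :=
    tendsto_atTop_add_const_left _ _ tendsto_natCast_atTop_atTop
  have hu : Tendsto (fun n : ℕ => stirlingError (s + n) - stirlingCorrection (s + n))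
      atTop (𝓝 0) := by
    simpa using (tendsto_stirlingError_add_natCast (by linarith)).sub
      (tendsto_stirlingCorrection.comp hshift)
  have hv : Tendsto (fun n : ℕ => 3 / (s + n) ^ 4) atTop (𝓝 0) :=
    (tendsto_const_nhds.div_atTop (tendsto_pow_atTop (by norm_num))).comp hshift
  have hstep (n : ℕ) : |(stirlingError (s + n) - stirlingCorrection (s + n)) -
      (stirlingError (s + ↑(n + 1)) - stirlingCorrection (s + ↑(n + 1)))| ≤
      3 / (s + n) ^ 4 - 3 / (s + ↑(n + 1)) ^ 4 := by
    rw [Nat.cast_succ, ← add_assoc]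
    exact abs_stirlingError_sub_stirlingCorrection_sub_add_one_le (by linarith [n.cast_nonneg (α := ℝ)])
  simpa using abs_le_of_abs_sub_succ_le hu hv hstep

lemma abs_exp_sub_expTaylor3_le {u : ℝ} (hu : |u| ≤ 1) : |exp u - expTaylor3 u| ≤ |u| ^ 4 := by
  have h := exp_bound hu (n := 4) (by norm_num)
  norm_num [Finset.sum_range_succ, Nat.factorial] at h
  calc |exp u - expTaylor3 u| ≤ |u| ^ 4 * (5 / 96) := h
    _ ≤ |u| ^ 4 := by nlinarith [pow_nonneg (abs_nonneg u) 4]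

lemma abs_expTaylor3_sub_le {u v : ℝ} (hu : |u| ≤ 1) (hv : |v| ≤ 1) :
    |expTaylor3 u - expTaylor3 v| ≤ 5 / 2 * |u - v| := by
  have hfactor : expTaylor3 u - expTaylor3 v =
      (u - v) * (1 + (u + v) / 2 + (u ^ 2 + u * v + v ^ 2) / 6) := by
    simp only [expTaylor3]; ring
  obtain ⟨hu₁, hu₂⟩ := abs_le.mp hu
  obtain ⟨hv₁, hv₂⟩ := abs_le.mp hv
  rw [hfactor, abs_mul, mul_comm]
  gcongr
  rw [abs_le]
  constructor <;> nlinarith [sq_nonneg (u + v), sq_nonneg (u - v)]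

lemma abs_stirlingCorrection_le {s : ℝ} (hs : 1 ≤ s) : |stirlingCorrection s| ≤ 1 / (12 * s) := by
  have hs0 : 0 < s := by linarith
  have hcubic : 1 / (360 * s ^ 3) ≤ 1 / (12 * s) := by
    gcongr
    · norm_num
    · exact le_self_pow₀ hs (by norm_num : 3 ≠ 0)
  rw [stirlingCorrection, abs_le]
  constructor <;> linarith [show 0 < 1 / (360 * s ^ 3) by positivity]

lemma abs_expTaylor3_stirlingCorrection_sub_le {s : ℝ} (hs : 1 ≤ s) :
    |expTaylor3 (stirlingCorrection s) -
      (1 + 1 / (12 * s) + 1 / (288 * s ^ 2) - 139 / (51840 * s ^ 3))| ≤ 1 / s ^ 4 := by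
  have hs0 : 0 < s := by linarith
  have hid : expTaylor3 (stirlingCorrection s) -
      (1 + 1 / (12 * s) + 1 / (288 * s ^ 2) - 139 / (51840 * s ^ 3)) =
      -((64800 * s ^ 5 + 2700 * s ^ 4 - 1080 * s ^ 3 - 90 * s ^ 2 + 1) / (279936000 * s ^ 9)) := by
    simp only [expTaylor3, stirlingCorrection]
    field_simp
    ring
  have hs1 := sub_nonneg.mpr hs
  have hnum : 0 < 64800 * s ^ 5 + 2700 * s ^ 4 - 1080 * s ^ 3 - 90 * s ^ 2 + 1 := by
    nlinarith [pow_pos hs0 2, pow_pos hs0 3, pow_pos hs0 4, mul_nonneg hs1 (pow_pos hs0 2).le,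
      mul_nonneg hs1 (pow_pos hs0 3).le, mul_nonneg hs1 (pow_pos hs0 4).le]
  rw [hid, abs_neg, abs_of_pos (by positivity), div_le_div_iff₀ (by positivity) (by positivity)]
  nlinarith [pow_pos hs0 4, pow_pos hs0 5, pow_pos hs0 6, pow_pos hs0 7, pow_pos hs0 8,
    pow_pos hs0 9]

lemma abs_exp_stirlingError_sub_le {s : ℝ} (hs : 2 ≤ s) :
    |exp (stirlingError s) -
      (1 + 1 / (12 * s) + 1 / (288 * s ^ 2) - 139 / (51840 * s ^ 3))| ≤ 10 / s ^ 4 := by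
  have hs0 : 0 < s := by linarith
  set μ := stirlingError s
  set A := stirlingCorrection s
  have hμA : |μ - A| ≤ 3 / s ^ 4 := abs_stirlingError_sub_stirlingCorrection_le hs
  have hA : |A| ≤ 1 / (12 * s) := abs_stirlingCorrection_le (by linarith)
  have hμ : |μ| ≤ 1 / (2 * s) := by
    have h3 : 3 / s ^ 4 ≤ 3 / (8 * s) := by
      gcongr
      nlinarith [pow_le_pow_left₀ (by norm_num) hs 3]
    calc |μ| ≤ |μ - A| + |A| := by linarith [abs_sub_abs_le_abs_sub μ A]
      _ ≤ 3 / (8 * s) + 1 / (12 * s) := by linarith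
      _ ≤ 1 / (2 * s) := by field_simp; norm_num
  have hμ1 : |μ| ≤ 1 := hμ.trans (by rw [div_le_one (by positivity)]; linarith)
  have hA1 : |A| ≤ 1 := hA.trans (by rw [div_le_one (by positivity)]; linarith)
  have hexp : |exp μ - expTaylor3 μ| ≤ 1 / s ^ 4 :=
    calc |exp μ - expTaylor3 μ| ≤ |μ| ^ 4 := abs_exp_sub_expTaylor3_le hμ1
      _ ≤ (1 / (2 * s)) ^ 4 := by gcongr
      _ ≤ 1 / s ^ 4 := by rw [div_pow]; gcongr <;> nlinarith
  calc _ ≤ |exp μ - expTaylor3 μ| + |expTaylor3 μ - expTaylor3 A| +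
        |expTaylor3 A - (1 + 1 / (12 * s) + 1 / (288 * s ^ 2) - 139 / (51840 * s ^ 3))| :=
        (abs_sub_le _ (expTaylor3 A) _).trans (add_le_add_left (abs_sub_le _ _ _) _)
    _ ≤ 1 / s ^ 4 + 5 / 2 * (3 / s ^ 4) + 1 / s ^ 4 := by
        refine add_le_add (add_le_add hexp ?_)
          (abs_expTaylor3_stirlingCorrection_sub_le (by linarith))
        exact (abs_expTaylor3_sub_le hμ1 hA1).trans (by gcongr)
    _ ≤ 10 / s ^ 4 := by ring_nf; gcongr; norm_num

theorem stmt_18 :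
    (fun s : ℝ =>
        Real.Gamma (s + 1) / ((s / Real.exp 1) ^ s * Real.sqrt (2 * Real.pi * s)) -
          (1 + 1 / (12 * s) + 1 / (288 * s ^ 2) - 139 / (51840 * s ^ 3)))
      =o[Filter.atTop] fun s : ℝ => 1 / s ^ 3 := by
  have hbigO : (fun s : ℝ =>
      Real.Gamma (s + 1) / ((s / Real.exp 1) ^ s * Real.sqrt (2 * Real.pi * s)) -
        (1 + 1 / (12 * s) + 1 / (288 * s ^ 2) - 139 / (51840 * s ^ 3)))
      =O[atTop] fun s : ℝ => 1 / s ^ 4 := by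
    refine IsBigO.of_bound 10 ?_
    filter_upwards [eventually_ge_atTop 2] with s hs
    have hs0 : 0 < s := by linarith
    rw [Gamma_add_one_div_eq_exp_stirlingError hs0, norm_eq_abs, norm_eq_abs,
      abs_of_pos (show (0 : ℝ) < 1 / s ^ 4 by positivity), mul_one_div]
    exact abs_exp_stirlingError_sub_le hs
  have hinv : (fun s : ℝ => s⁻¹) =o[atTop] fun _ => (1 : ℝ) :=
    (isLittleO_one_iff ℝ).mpr tendsto_inv_atTop_zero
  refine hbigO.trans_isLittleO <|
    (hinv.mul_isBigO (isBigO_refl (fun s : ℝ => 1 / s ^ 3) atTop)).congr' ?_ (by simp)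
  filter_upwards [eventually_ne_atTop 0] with s hs
  field_simp
end
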